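/- arXiv:1804.01931 — 9 statements merged into one kernel-verified Lean document; each statement's English description precedes it below -/
import Mathlib

section
/- For every n ≥ 1, every n-path-universal word (a word over alphabet [n] containing as subwords all words induced by paths of the n-dimensional hypercube) has length at least n·2^(n-1). -/
/-- One asynchronous update step: replace coordinate `i` of `x` by `f x i`. -/
def updateStep {n : ℕ} (f : (Fin n → Bool) → (Fin n → Bool)) (x : Fin n → Bool)
    (i : Fin n) : Fin n → Bool :=
  Function.update x i (f x i)

/-- Action of a word on a state. -/
def applyWord {n : ℕ} (f : (Fin n → Bool) → (Fin n → Bool)) :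
    List (Fin n) → (Fin n → Bool) → (Fin n → Bool)
  | [], x => x
  | i :: w, x => applyWord f w (updateStep f x i)

/-- A word `w` fixes `f` if applying it to any state yields a fixed point of `f`. -/
def Fixes {n : ℕ} (f : (Fin n → Bool) → (Fin n → Bool)) (w : List (Fin n)) : Prop :=
  ∀ x, f (applyWord f w x) = applyWord f w x

/-- Arc of the asynchronous graph. -/
def AsyncArc {n : ℕ} (f : (Fin n → Bool) → (Fin n → Bool))
    (x y : Fin n → Bool) : Prop :=
  ∃ i : Fin n, f x i ≠ x i ∧ y = Function.update x i (f x i)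

/-- `w` is induced by a path of the `n`-cube. -/
def IsPathWord (n : ℕ) (w : List (Fin n)) : Prop :=
  ∃ xs : List (Fin n → Bool), xs.Nodup ∧ xs.length = w.length + 1 ∧
    ∀ k (hk : k < w.length),
      xs.getD (k + 1) default =
        Function.update (xs.getD k default) (w.get ⟨k, hk⟩)
          (!(xs.getD k default (w.get ⟨k, hk⟩)))

/-- `W` contains every `n`-path-word as a subword. -/
def PathUniversal (n : ℕ) (W : List (Fin n)) : Prop :=
  ∀ w : List (Fin n), IsPathWord n w → w.Sublist W

/-!
For each coordinate `i`, the binary reflected Gray code in which `i` is the fastest-changing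
coordinate is a Hamiltonian path of the cube, and its word uses the letter `i` exactly
`2 ^ (n - 1)` times. A path-universal word therefore contains every letter at least
`2 ^ (n - 1)` times.
-/

namespace List

variable {α β : Type*}

theorem scanl_of_comm {f : β → α → β} {g : β → β} (hfg : ∀ b a, f (g b) a = g (f b a))
    (b : β) (l : List α) : l.scanl f (g b) = (l.scanl f b).map g := by
  induction l generalizing b with
  | nil => rfl
  | cons a l ih => simp only [scanl_cons, map_cons, hfg, ih]

theorem foldl_reverse_foldl_of_involutive {f : β → α → β} (hf : ∀ b a, f (f b a) a = b)
    (b : β) (l : List α) : l.reverse.foldl f (l.foldl f b) = b := by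
  induction l generalizing b with
  | nil => rfl
  | cons a l ih => simp [ih, hf]

theorem scanl_reverse_of_involutive {f : β → α → β} (hf : ∀ b a, f (f b a) a = b)
    (b : β) (l : List α) : l.reverse.scanl f (l.foldl f b) = (l.scanl f b).reverse := by
  induction l generalizing b with
  | nil => rfl
  | cons a l ih =>
    rw [reverse_cons, scanl_append, foldl_cons, ih, foldl_reverse_foldl_of_involutive hf]
    simp [hf]

end List

section GrayCode

variable {α : Type*}

/-- The word of the binary reflected Gray code on the coordinates `l`; the last coordinate of
`l` changes fastest. -/
def grayWord : List α → List α
  | [] => []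
  | c :: l => grayWord l ++ c :: (grayWord l).reverse

theorem mem_of_mem_grayWord {a : α} {l : List α} (h : a ∈ grayWord l) : a ∈ l := by
  induction l with
  | nil => exact h
  | cons c l ih =>
    simp only [grayWord, List.mem_append, List.mem_cons, List.mem_reverse] at h
    rcases h with h | rfl | h <;> simp [*]

variable [DecidableEq α]

def flipCoord (x : α → Bool) (i : α) : α → Bool :=
  Function.update x i (!x i)

theorem flipCoord_flipCoord_self (x : α → Bool) (i : α) : flipCoord (flipCoord x i) i = x := by
  rw [flipCoord, flipCoord, Function.update_idem, Function.update_self, Bool.not_not,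
    Function.update_eq_self]

theorem flipCoord_comm (x : α → Bool) (i j : α) :
    flipCoord (flipCoord x i) j = flipCoord (flipCoord x j) i := by
  funext k
  simp only [flipCoord, Function.update_apply]
  grind

theorem flipCoord_injective (i : α) : Function.Injective (flipCoord · i) :=
  fun x y h => by simpa only [flipCoord_flipCoord_self] using congrArg (flipCoord · i) h

theorem apply_of_mem_scanl_flipCoord {x y : α → Bool} {w : List α}
    (hy : y ∈ w.scanl flipCoord x) {j : α} (hj : j ∉ w) : y j = x j := by
  induction w generalizing x with
  | nil => simp_all
  | cons a w ih =>
    rw [List.scanl_cons, List.mem_cons] at hy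
    rw [List.mem_cons, not_or] at hj
    rcases hy with rfl | hy
    · rfl
    · rw [ih hy hj.2, flipCoord, Function.update_of_ne hj.1]

theorem count_grayWord_append_singleton {i : α} {l : List α} (hi : i ∉ l) :
    (grayWord (l ++ [i])).count i = 2 ^ l.length := by
  induction l with
  | nil => simp [grayWord]
  | cons c l ih =>
    rw [List.mem_cons, not_or] at hi
    simp [grayWord, Ne.symm hi.1, ih hi.2, pow_succ, mul_two]

theorem scanl_grayWord_cons (x : α → Bool) (c : α) (l : List α) :
    (grayWord (c :: l)).scanl flipCoord x =
      (grayWord l).scanl flipCoord x ++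
        ((grayWord l).scanl flipCoord x).reverse.map (flipCoord · c) := by
  rw [grayWord, List.scanl_append, List.scanl_cons, List.tail_cons,
    List.scanl_of_comm (fun y a => flipCoord_comm y c a),
    List.scanl_reverse_of_involutive flipCoord_flipCoord_self]

theorem nodup_scanl_grayWord (x : α → Bool) {l : List α} (hl : l.Nodup) :
    ((grayWord l).scanl flipCoord x).Nodup := by
  induction l with
  | nil => simp [grayWord]
  | cons c l ih =>
    rw [List.nodup_cons] at hl
    have hc : ∀ y ∈ (grayWord l).scanl flipCoord x, y c = x c := fun y hy =>
      apply_of_mem_scanl_flipCoord hy (fun h => hl.1 (mem_of_mem_grayWord h))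
    rw [scanl_grayWord_cons, List.nodup_append]
    refine ⟨ih hl.2, ((List.nodup_reverse.2 (ih hl.2)).map (flipCoord_injective c)), ?_⟩
    intro y hy z hz hyz
    obtain ⟨y', hy', rfl⟩ := List.mem_map.1 hz
    have := congrFun hyz c
    simp [flipCoord, hc y hy, hc y' (List.mem_reverse.1 hy')] at this

theorem exists_nodup_scanl_flipCoord_count_eq [Fintype α] (x : α → Bool) (i : α) :
    ∃ w : List α, (w.scanl flipCoord x).Nodup ∧ w.count i = 2 ^ (Fintype.card α - 1) := by
  have hi : i ∉ (Finset.univ.erase i).toList := by simp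
  refine ⟨grayWord ((Finset.univ.erase i).toList ++ [i]), nodup_scanl_grayWord x ?_, ?_⟩
  · exact (Finset.nodup_toList _).append (List.nodup_singleton i) (by simp)
  · rw [count_grayWord_append_singleton hi, Finset.length_toList,
      Finset.card_erase_of_mem (Finset.mem_univ i), Finset.card_univ]

end GrayCode

theorem isPathWord_of_nodup_scanl {n : ℕ} {w : List (Fin n)} {x : Fin n → Bool}
    (h : (w.scanl flipCoord x).Nodup) : IsPathWord n w := by
  refine ⟨_, h, List.length_scanl, fun k hk => ?_⟩
  rw [List.getD_eq_getElem _ _ (by simp; omega), List.getD_eq_getElem _ _ (by simp; omega),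
    List.getElem_succ_scanl]
  rfl

theorem pathUniversal_length_lower_bound_general (n : ℕ)
    (W : List (Fin n)) (hW : PathUniversal n W) :
    n * 2 ^ (n - 1) ≤ W.length := by
  have hcount (i : Fin n) : 2 ^ (n - 1) ≤ W.count i := by
    obtain ⟨w, hw, hwi⟩ := exists_nodup_scanl_flipCoord_count_eq (fun _ => false) i
    rw [Fintype.card_fin] at hwi
    exact hwi ▸ (hW w (isPathWord_of_nodup_scanl hw)).count_le i
  calc n * 2 ^ (n - 1) = ∑ _i : Fin n, 2 ^ (n - 1) := by simp
    _ ≤ ∑ i : Fin n, W.count i := Finset.sum_le_sum fun i _ => hcount i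
    _ = W.length := by
      simpa using Multiset.sum_count_eq_card (s := Finset.univ) (m := (W : Multiset (Fin n)))
        (by simp)

/-- every `n`-path-universal word has length at least `n * 2^(n-1)`. -/
theorem pathUniversal_length_lower_bound (n : ℕ) (hn : 1 ≤ n)
    (W : List (Fin n)) (hW : PathUniversal n W) :
    n * 2 ^ (n - 1) ≤ W.length :=
  pathUniversal_length_lower_bound_general n W hW
end

section
/- For every n ≥ 1, there exists an n-path-universal word of length at most (n-1)(2^n - 1) + 1. Concretely, the word W := 1, u^1, u^2, …, u^{2^n - 1}, where u^k = 2,3,…,n for odd k and u^k = n-1, n-2, …, 1 for even k, is n-path-universal. -/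
/-- The block `u^k` for odd `k`: letters `2, 3, …, n` (0-indexed: `1, …, n-1`). -/
def upBlock (n : ℕ) : List (Fin n) := (List.finRange n).drop 1

/-- The block `u^k` for even `k`: letters `n-1, n-2, …, 1` (0-indexed: `n-2, …, 0`). -/
def downBlock (n : ℕ) : List (Fin n) := ((List.finRange n).take (n - 1)).reverse

/-- The word `W := 1, u^1, u^2, …, u^{2^n - 1}` with `u^k = 2,…,n` for odd `k`
and `u^k = n-1,…,1` for even `k`. -/
def zigzagWord (n : ℕ) : List (Fin n) :=
  (List.finRange n).take 1 ++
    (List.range (2 ^ n - 1)).flatMap (fun k => if k % 2 = 0 then upBlock n else downBlock n)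

/-!
A path word never repeats a letter twice in a row, and it has fewer than `2 ^ n` letters because
the path visits distinct vertices. Cut such a word greedily into maximal runs, alternately
increasing and decreasing. An increasing run that follows a descent cannot contain the letter `1`,
and a decreasing run that follows an ascent cannot contain `n`, so the runs fit into the blocks
`2, …, n` and `n - 1, …, 1` of the word in turn. Every block absorbs at least one letter, so
`2 ^ n - 1` blocks suffice, and the leading `1` takes care of a word starting with `1`.
-/

theorem List.exists_maximal_isChain_prefix {α : Type*} (R : α → α → Prop) (a : α) (t : List α) :
    ∃ r s, t = r ++ s ∧ (a :: r).IsChain R ∧ ∀ x ∈ (a :: r).getLast?, ∀ y ∈ s.head?, ¬ R x y := by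
  induction t generalizing a with
  | nil => exact ⟨[], [], rfl, .singleton a, by simp⟩
  | cons b t ih =>
    by_cases hab : R a b
    · obtain ⟨r, s, rfl, hr, hmax⟩ := ih b
      exact ⟨b :: r, s, rfl, hr.cons (by simpa using hab), by simpa using hmax⟩
    · exact ⟨[], b :: t, rfl, .singleton a, by simpa using hab⟩

theorem List.Pairwise.sublist_of_subset {α : Type*} {r : α → α → Prop} [Std.Antisymm r]
    [Std.Irrefl r] {l₁ l₂ : List α} (h₁ : l₁.Pairwise r) (h₂ : l₂.Pairwise r) (h : l₁ ⊆ l₂) :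
    l₁.Sublist l₂ :=
  List.sublist_of_subperm_of_pairwise (List.subperm_of_subset h₁.nodup h) h₁ h₂

theorem mem_upBlock {n : ℕ} {a : Fin n} : a ∈ upBlock n ↔ (a : ℕ) ≠ 0 := by
  rcases n with _ | n
  · exact a.elim0
  · rw [upBlock, List.finRange_succ, List.drop_one, List.tail_cons, List.mem_map]
    exact ⟨by rintro ⟨b, -, rfl⟩; simp, fun h => ⟨a.pred (Fin.ext_iff.not.2 h), by simp⟩⟩

theorem pairwise_lt_upBlock (n : ℕ) : (upBlock n).Pairwise (· < ·) :=
  (List.pairwise_lt_finRange n).sublist (List.drop_sublist _ _)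

theorem map_rev_upBlock (n : ℕ) : (upBlock n).map Fin.rev = downBlock n := by
  apply List.ext_getElem (by simp [upBlock, downBlock])
  intro i h₁ h₂
  simp only [upBlock, downBlock, List.getElem_map, List.getElem_drop, List.getElem_reverse,
    List.getElem_take, List.getElem_finRange, Fin.ext_iff, Fin.val_rev, Fin.val_cast,
    List.length_take, List.length_finRange]
  simp [upBlock] at h₁
  omega

/-- `Fin.rev` swaps `upBlock` and `downBlock` (`map_rev_upBlock`), so this is `u¹ u² ⋯ uᵐ`;
writing it through the reflection lets a single induction handle both kinds of block. -/
def zigzagBlocks (n : ℕ) : ℕ → List (Fin n)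
  | 0 => []
  | m + 1 => upBlock n ++ (zigzagBlocks n m).map Fin.rev

theorem flatMap_range_alternating (n m : ℕ) :
    (List.range m).flatMap (fun k => if k % 2 = 0 then upBlock n else downBlock n) =
      zigzagBlocks n m := by
  induction m with
  | zero => rfl
  | succ m ih =>
    rw [List.range_succ_eq_map, List.flatMap_cons, List.flatMap_map, zigzagBlocks, ← ih,
      List.map_flatMap]
    congr 1
    refine List.flatMap_congr fun k _ => ?_
    rcases Nat.mod_two_eq_zero_or_one k with hk | hk
    · simp [hk, Nat.succ_mod_two_eq_one_iff.2 hk, map_rev_upBlock]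
    · simp [hk, Nat.succ_mod_two_eq_zero_iff.2 hk, ← map_rev_upBlock, Function.comp_def]

theorem zigzagWord_eq (n : ℕ) :
    zigzagWord n = (List.finRange n).take 1 ++ zigzagBlocks n (2 ^ n - 1) := by
  rw [zigzagWord, flatMap_range_alternating]

theorem length_zigzagBlocks (n m : ℕ) : (zigzagBlocks n m).length = (n - 1) * m := by
  induction m with
  | zero => rfl
  | succ m ih => simp [zigzagBlocks, ih, upBlock, Nat.mul_succ, Nat.add_comm]

theorem sublist_upBlock_of_isChain_lt {n : ℕ} {a : Fin n} {r : List (Fin n)}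
    (hr : (a :: r).IsChain (· < ·)) (ha : (a : ℕ) ≠ 0) : (a :: r).Sublist (upBlock n) := by
  refine hr.pairwise.sublist_of_subset (pairwise_lt_upBlock n) fun x hx => mem_upBlock.2 ?_
  rcases List.mem_cons.1 hx with rfl | hx
  · exact ha
  · exact Nat.ne_zero_of_lt (List.rel_of_pairwise_cons hr.pairwise hx)

theorem sublist_zigzagBlocks {n : ℕ} (m : ℕ) (w : List (Fin n)) (hw : w.IsChain (· ≠ ·))
    (hlen : w.length ≤ m) (hhead : ∀ a ∈ w.head?, (a : ℕ) ≠ 0) :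
    w.Sublist (zigzagBlocks n m) := by
  induction m generalizing w with
  | zero => simp_all
  | succ m ih =>
    obtain _ | ⟨a, t⟩ := w
    · exact List.nil_sublist _
    obtain ⟨r, s, rfl, hr, hmax⟩ := List.exists_maximal_isChain_prefix (· < ·) a t
    rw [← List.cons_append] at hw hlen ⊢
    refine (sublist_upBlock_of_isChain_lt hr (by simpa using hhead)).append ?_
    -- `s` starts below the last letter of the increasing run, so its reflection avoids `0`.
    have hs : (s.map Fin.rev).Sublist (zigzagBlocks n m) := by
      refine ih _ ((List.isChain_map _).2 ?_) (by simp at hlen ⊢; omega) ?_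
      · exact hw.right_of_append.imp fun x y h => Fin.rev_injective.ne h
      · simp only [List.head?_map, Option.mem_map, forall_exists_index, and_imp]
        rintro _ c hc rfl
        obtain ⟨b, hb⟩ : ∃ b, b ∈ (a :: r).getLast? :=
          ⟨_, List.getLast?_eq_getLast_of_ne_nil (by simp)⟩
        have hcb : c < b := lt_of_le_of_ne (not_lt.1 (hmax b hb c hc))
          ((List.isChain_append.1 hw).2.2 b hb c hc).symm
        simp only [Fin.val_rev]
        omega
    simpa [List.map_map, Function.comp_def] using hs.map Fin.rev

theorem IsPathWord.length_lt {n : ℕ} {w : List (Fin n)} (h : IsPathWord n w) :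
    w.length < 2 ^ n := by
  obtain ⟨xs, hnd, hlen, -⟩ := h
  simpa [hlen] using hnd.length_le_card

theorem IsPathWord.isChain_ne {n : ℕ} {w : List (Fin n)} (h : IsPathWord n w) :
    w.IsChain (· ≠ ·) := by
  obtain ⟨xs, hnd, hlen, hstep⟩ := h
  refine List.isChain_iff_getElem.2 fun i hi heq => ?_
  have hback : xs[i + 2] = xs[i] := by
    have h₁ := hstep i (by omega)
    have h₂ := hstep (i + 1) hi
    simp only [List.getD_eq_getElem _ _ (show i + 2 < xs.length by omega),
      List.getD_eq_getElem _ _ (show i + 1 < xs.length by omega),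
      List.getD_eq_getElem _ _ (show i < xs.length by omega)] at h₁ h₂
    simp only [List.get_eq_getElem] at h₁ h₂
    rw [h₂, ← heq, h₁]
    simp
  have := (List.Nodup.getElem_inj_iff hnd).1 hback
  omega

theorem length_zigzagWord_le (n : ℕ) :
    (zigzagWord n).length ≤ (n - 1) * (2 ^ n - 1) + 1 := by
  simp only [zigzagWord_eq, List.length_append, length_zigzagBlocks, List.length_take]
  omega

theorem pathUniversal_zigzagWord (n : ℕ) : PathUniversal n (zigzagWord n) := by
  intro w hw
  have hchain := hw.isChain_ne
  have hlen := hw.length_lt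
  rw [zigzagWord_eq]
  obtain _ | ⟨a, t⟩ := w
  · exact List.nil_sublist _
  by_cases ha : (a : ℕ) = 0
  · obtain ⟨k, rfl⟩ := Nat.exists_eq_add_one_of_ne_zero a.pos.ne'
    have hfirst : (List.finRange (k + 1)).take 1 = [a] := by
      simp [List.finRange_succ, Fin.ext_iff, ha]
    rw [hfirst, List.singleton_append]
    refine (sublist_zigzagBlocks _ t hchain.tail (by simp at hlen; omega) ?_).cons_cons a
    intro b hb h0
    exact (List.isChain_cons.1 hchain).1 b hb (Fin.ext (ha.trans h0.symm))
  · exact (sublist_zigzagBlocks _ _ hchain (by omega) (by simpa using ha)).trans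
      (List.sublist_append_right _ _)

theorem pathUniversal_upper_bound_general (n : ℕ) :
    PathUniversal n (zigzagWord n) ∧
      (zigzagWord n).length ≤ (n - 1) * (2 ^ n - 1) + 1 :=
  ⟨pathUniversal_zigzagWord n, length_zigzagWord_le n⟩

/-- `zigzagWord n` is `n`-path-universal and has length at most
`(n-1)(2^n - 1) + 1`; in particular such a word exists. -/
theorem pathUniversal_upper_bound (n : ℕ) (hn : 1 ≤ n) :
    PathUniversal n (zigzagWord n) ∧
      (zigzagWord n).length ≤ (n - 1) * (2 ^ n - 1) + 1 :=
  pathUniversal_upper_bound_general n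
end

section
/- Let f : {0,1}^n → {0,1}^n be a Boolean network whose asynchronous graph is acyclic, and suppose f has r fixed points (r ≥ 1 follows from acyclicity). Then there exists a word of length at most 2^n - r that fixes f. -/
/-!
Acyclicity makes reachability in `Γ(f)` a partial order; list the states `a₁, …, a_{2^n}` along
a linear extension of it, so that no state reaches an earlier one. The word has one letter for
each unstable state `a_k`: a coordinate that `f` changes at `a_k`. Along the word, the current
state `y` only reaches states not yet visited by the list: when the list passes `y` itself, the
letter moves `y` along an arc, and acyclicity forbids coming back. Since the list is exhausted at
the end, `y` must have become stable on the way, and stable states are never left. The `r` stable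
states contribute no letter, whence the length `2^n - r`.
-/

section Topological

variable {α : Type*} {R : α → α → Prop}

theorem antisymm_reflTransGen (hR : ∀ x, ¬ Relation.TransGen R x x) {x y : α}
    (hxy : Relation.ReflTransGen R x y) (hyx : Relation.ReflTransGen R y x) : x = y := by
  rcases Relation.reflTransGen_iff_eq_or_transGen.mp hxy with h | h
  · exact h.symm
  rcases Relation.reflTransGen_iff_eq_or_transGen.mp hyx with h' | h'
  · exact h'
  exact (hR x (h.trans h')).elim

theorem exists_list_topological_order [Fintype α] (hR : ∀ x, ¬ Relation.TransGen R x x) :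
    ∃ L : List α, (L : Multiset α) = Finset.univ.val ∧
      L.Pairwise (fun a b => ¬ Relation.TransGen R b a) := by
  classical
  have : IsPartialOrder α (Relation.ReflTransGen R) :=
    { refl := fun _ => .refl
      trans := fun _ _ _ => .trans
      antisymm := fun _ _ => antisymm_reflTransGen hR }
  obtain ⟨s, _, hRs⟩ := extend_partialOrder (Relation.ReflTransGen R)
  refine ⟨Finset.univ.sort s, Finset.sort_eq _ _, ?_⟩
  refine ((Finset.pairwise_sort _ s).and (Finset.sort_nodup _ s)).imp ?_
  rintro a b ⟨hab, hne⟩ hba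
  exact hne (antisymm_of s hab (hRs b a hba.to_reflTransGen))

end Topological

section Network

variable {n : ℕ} {f : (Fin n → Bool) → (Fin n → Bool)}

noncomputable def unstableCoord (f : (Fin n → Bool) → (Fin n → Bool)) (a : Fin n → Bool)
    (h : f a ≠ a) : Fin n :=
  (Function.ne_iff.mp h).choose

theorem unstableCoord_spec {a : Fin n → Bool} (h : f a ≠ a) :
    f a (unstableCoord f a h) ≠ a (unstableCoord f a h) :=
  (Function.ne_iff.mp h).choose_spec

noncomputable def wordOfStates (f : (Fin n → Bool) → (Fin n → Bool))
    (L : List (Fin n → Bool)) : List (Fin n) :=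
  L.filterMap fun a => if h : f a = a then none else some (unstableCoord f a h)

theorem wordOfStates_cons_of_eq {a : Fin n → Bool} (L : List (Fin n → Bool)) (h : f a = a) :
    wordOfStates f (a :: L) = wordOfStates f L := by
  simp [wordOfStates, h]

theorem wordOfStates_cons_of_ne {a : Fin n → Bool} (L : List (Fin n → Bool)) (h : f a ≠ a) :
    wordOfStates f (a :: L) = unstableCoord f a h :: wordOfStates f L := by
  simp [wordOfStates, h]

theorem length_wordOfStates (L : List (Fin n → Bool)) :
    (wordOfStates f L).length = L.countP (fun a => f a ≠ a) := by
  induction L with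
  | nil => rfl
  | cons a L ih =>
    by_cases h : f a = a
    · simp [wordOfStates_cons_of_eq L h, ih, h]
    · simp [wordOfStates_cons_of_ne L h, ih, h]

theorem updateStep_of_eq {x : Fin n → Bool} {i : Fin n} (h : f x i = x i) :
    updateStep f x i = x :=
  Function.update_eq_self_iff.mpr h

theorem asyncArc_updateStep {x : Fin n → Bool} {i : Fin n} (h : f x i ≠ x i) :
    AsyncArc f x (updateStep f x i) :=
  ⟨i, h, rfl⟩

theorem reflTransGen_updateStep (x : Fin n → Bool) (i : Fin n) :
    Relation.ReflTransGen (AsyncArc f) x (updateStep f x i) := by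
  by_cases h : f x i = x i
  · rw [updateStep_of_eq h]
  · exact .single (asyncArc_updateStep h)

theorem applyWord_of_isFixedPt {y : Fin n → Bool} (hy : Function.IsFixedPt f y)
    (w : List (Fin n)) :
    applyWord f w y = y := by
  induction w with
  | nil => rfl
  | cons i w ih =>
    have hi : f y i = y i := congrFun hy i
    simpa only [applyWord, updateStep_of_eq hi] using ih

theorem forall_reachable_mem_tail {y y' a : Fin n → Bool} {L : List (Fin n → Bool)}
    (hy : ∀ z, Relation.ReflTransGen (AsyncArc f) y z → z ∈ a :: L)
    (hyy' : Relation.ReflTransGen (AsyncArc f) y y')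
    (ha : ¬ Relation.ReflTransGen (AsyncArc f) y' a) :
    ∀ z, Relation.ReflTransGen (AsyncArc f) y' z → z ∈ L := by
  intro z hz
  rcases List.mem_cons.mp (hy z (hyy'.trans hz)) with rfl | hzL
  · exact (ha hz).elim
  · exact hzL

theorem isFixedPt_applyWord_wordOfStates (hacyc : ∀ x, ¬ Relation.TransGen (AsyncArc f) x x)
    (L : List (Fin n → Bool)) (hL : L.Pairwise fun a b => ¬ Relation.TransGen (AsyncArc f) b a)
    (y : Fin n → Bool) (hy : ∀ z, Relation.ReflTransGen (AsyncArc f) y z → z ∈ L) :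
    Function.IsFixedPt f (applyWord f (wordOfStates f L) y) := by
  induction L generalizing y with
  | nil => exact (List.not_mem_nil (hy y .refl)).elim
  | cons a L ih =>
    obtain ⟨ha, hL⟩ := List.pairwise_cons.mp hL
    -- A state listed after `a` cannot reach `a`, so neither can anything it reaches.
    have not_reach_a : ∀ y', y ≠ a → Relation.ReflTransGen (AsyncArc f) y y' →
        ¬ Relation.ReflTransGen (AsyncArc f) y' a := fun y' hya hyy' hy'a => by
      have hyL : y ∈ L := (List.mem_cons.mp (hy y .refl)).resolve_left hya
      rcases Relation.reflTransGen_iff_eq_or_transGen.mp (hyy'.trans hy'a) with h | h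
      · exact hya h.symm
      · exact ha y hyL h
    by_cases hfa : f a = a
    · rw [wordOfStates_cons_of_eq L hfa]
      by_cases hya : y = a
      · rw [hya, applyWord_of_isFixedPt hfa]
        exact hfa
      · exact ih hL y (forall_reachable_mem_tail hy .refl (not_reach_a y hya .refl))
    · rw [wordOfStates_cons_of_ne L hfa]
      set y' := updateStep f y (unstableCoord f a hfa)
      have hyy' : Relation.ReflTransGen (AsyncArc f) y y' := reflTransGen_updateStep _ _
      refine ih hL y' (forall_reachable_mem_tail hy hyy' ?_)
      by_cases hya : y = a
      · subst hya
        exact fun hy'y => hacyc y (.head' (asyncArc_updateStep (unstableCoord_spec hfa)) hy'y)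
      · exact not_reach_a y' hya hyy'

end Network

/-- if the asynchronous graph of `f` is acyclic and `f` has `r`
fixed points, then some word of length at most `2^n - r` fixes `f`. -/
theorem acyclic_fixing_word_of_length (n : ℕ) (f : (Fin n → Bool) → (Fin n → Bool))
    (hacyc : ∀ x, ¬ Relation.TransGen (AsyncArc f) x x)
    (r : ℕ) (hr : r = (Finset.univ.filter (fun x : Fin n → Bool => f x = x)).card) :
    ∃ w : List (Fin n), w.length ≤ 2 ^ n - r ∧ Fixes f w := by
  obtain ⟨L, hLuniv, hLtopo⟩ := exists_list_topological_order hacyc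
  have hmem : ∀ z, z ∈ L := fun z => by simp [← Multiset.mem_coe, hLuniv]
  refine ⟨wordOfStates f L, ?_,
    fun x => isFixedPt_applyWord_wordOfStates hacyc L hLtopo x fun z _ => hmem z⟩
  have hunstable : L.countP (fun a => f a ≠ a) =
      (Finset.univ.filter (fun x : Fin n → Bool => ¬ f x = x)).card := by
    rw [← Multiset.coe_countP, hLuniv, Multiset.countP_eq_card_filter]
    rfl
  have hsplit := Finset.card_filter_add_card_filter_not (s := Finset.univ)
    (fun x : Fin n → Bool => f x = x)
  simp only [Finset.card_univ, Fintype.card_fun, Fintype.card_bool, Fintype.card_fin] at hsplit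
  rw [length_wordOfStates, hunstable, hr]
  omega
end

section
/- Every word that fixes all Boolean networks on n components with acyclic asynchronous graph is n-path-universal. Consequently, the fixing length of the family of n-component asynchronous-acyclic networks equals the minimum length Λ(n) of an n-path-universal word. -/
/-- A word fixes the whole family of `n`-component asynchronous-acyclic networks. -/
def FixesAcyclicFamily (n : ℕ) (W : List (Fin n)) : Prop :=
  ∀ f : (Fin n → Bool) → (Fin n → Bool),
    (∀ x, ¬ Relation.TransGen (AsyncArc f) x x) → Fixes f W

/-!
If `w` is induced by a path `x₀ → ⋯ → xₖ` of the cube, the network that flips `wⱼ` at `xⱼ` and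
is constant elsewhere is asynchronous-acyclic, and from `x₀` a word only reaches the fixed point
`xₖ` by spelling out `w` as a subword; hence a word fixing every acyclic network is
path-universal. Conversely, for an acyclic network the letters of `W` that really change the
state along a run form a path word; if the final state were not fixed, an unstable coordinate
would extend it to a longer path word, which cannot embed in `W` because the effective letters
are its greedy embedding.
-/

theorem Relation.not_transGen_self_of_map_lt {α β : Type*} [Preorder β] {r : α → α → Prop}
    (φ : α → β) (h : ∀ a b, r a b → φ a < φ b) (a : α) : ¬ Relation.TransGen r a a := fun hcyc =>
  lt_irrefl (φ a) <| by simpa [Relation.transGen_eq_self] using hcyc.lift φ h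

theorem List.IsChain.nodup_of_acyclic {α : Type*} {r : α → α → Prop} {l : List α}
    (hl : l.IsChain r) (hr : ∀ a, ¬ Relation.TransGen r a a) : l.Nodup :=
  haveI : Std.Irrefl (Relation.TransGen r) := ⟨hr⟩
  (hl.imp fun _ _ => Relation.TransGen.single).pairwise.nodup

namespace BoolNetwork

variable {n : ℕ}

def flipWord : List (Fin n) → (Fin n → Bool) → (Fin n → Bool)
  | [], x => x
  | i :: w, x => flipWord w (Function.update x i (!x i))

def cubeWalk : List (Fin n) → (Fin n → Bool) → List (Fin n → Bool)
  | [], x => [x]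
  | i :: w, x => x :: cubeWalk w (Function.update x i (!x i))

theorem length_cubeWalk (w : List (Fin n)) (x : Fin n → Bool) :
    (cubeWalk w x).length = w.length + 1 := by
  induction w generalizing x with
  | nil => rfl
  | cons i w ih => simp [cubeWalk, ih]

theorem getD_cubeWalk_zero (w : List (Fin n)) (x : Fin n → Bool) :
    (cubeWalk w x).getD 0 default = x := by
  cases w <;> rfl

theorem getD_cubeWalk_succ (w : List (Fin n)) (x : Fin n → Bool) (k : ℕ) (hk : k < w.length) :
    (cubeWalk w x).getD (k + 1) default =
      Function.update ((cubeWalk w x).getD k default) (w.get ⟨k, hk⟩)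
        (!((cubeWalk w x).getD k default (w.get ⟨k, hk⟩))) := by
  induction w generalizing x k with
  | nil => simp at hk
  | cons i w ih =>
    cases k with
    | zero => simp only [cubeWalk, List.getD_cons_succ, List.getD_cons_zero, getD_cubeWalk_zero,
        List.get]
    | succ k => simpa [cubeWalk] using ih _ k (by simpa using hk)

theorem isPathWord_of_nodup_cubeWalk {w : List (Fin n)} {x : Fin n → Bool}
    (h : (cubeWalk w x).Nodup) : IsPathWord n w :=
  ⟨cubeWalk w x, h, length_cubeWalk w x, getD_cubeWalk_succ w x⟩

/-- `IsPathWord n w` unfolds to `∃ xs, IsCubePath w xs`. -/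
def IsCubePath (w : List (Fin n)) (xs : List (Fin n → Bool)) : Prop :=
  xs.Nodup ∧ xs.length = w.length + 1 ∧
    ∀ k (hk : k < w.length),
      xs.getD (k + 1) default =
        Function.update (xs.getD k default) (w.get ⟨k, hk⟩)
          (!(xs.getD k default (w.get ⟨k, hk⟩)))

section PathNetwork

variable {w : List (Fin n)} {xs : List (Fin n → Bool)}

open Classical in
noncomputable def pathNetwork (w : List (Fin n)) (xs : List (Fin n → Bool)) :
    (Fin n → Bool) → (Fin n → Bool) :=
  fun x i => if ∃ k : Fin w.length, xs.getD k default = x ∧ w.get k = i then !x i else x i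

theorem IsCubePath.idxOf_getD (h : IsCubePath w xs) {k : ℕ} (hk : k ≤ w.length) :
    xs.idxOf (xs.getD k default) = k := by
  rw [List.getD_eq_getElem _ _ (by have := h.2.1; omega)]
  exact h.1.idxOf_getElem k _

theorem IsCubePath.pathNetwork_apply_of_ne (h : IsCubePath w xs) {k : ℕ} (hk : k ≤ w.length)
    {i : Fin n} (hi : ∀ hk' : k < w.length, i ≠ w.get ⟨k, hk'⟩) :
    pathNetwork w xs (xs.getD k default) i = xs.getD k default i := by
  rw [pathNetwork, if_neg]
  rintro ⟨k', hk', rfl⟩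
  have : (k' : ℕ) = k := by
    rw [← h.idxOf_getD k'.isLt.le, ← h.idxOf_getD hk, hk']
  exact hi (this ▸ k'.isLt) (by simp [this])

theorem IsCubePath.updateStep_pathNetwork_of_ne (h : IsCubePath w xs) {k : ℕ}
    (hk : k ≤ w.length) {i : Fin n} (hi : ∀ hk' : k < w.length, i ≠ w.get ⟨k, hk'⟩) :
    updateStep (pathNetwork w xs) (xs.getD k default) i = xs.getD k default := by
  rw [updateStep, h.pathNetwork_apply_of_ne hk hi, Function.update_eq_self]

theorem pathNetwork_apply_get {k : ℕ} (hk : k < w.length) :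
    pathNetwork w xs (xs.getD k default) (w.get ⟨k, hk⟩) =
      !xs.getD k default (w.get ⟨k, hk⟩) := by
  rw [pathNetwork, if_pos ⟨⟨k, hk⟩, rfl, rfl⟩]

theorem IsCubePath.updateStep_pathNetwork_get (h : IsCubePath w xs) {k : ℕ}
    (hk : k < w.length) :
    updateStep (pathNetwork w xs) (xs.getD k default) (w.get ⟨k, hk⟩) =
      xs.getD (k + 1) default := by
  rw [updateStep, pathNetwork_apply_get hk, h.2.2 k hk]

theorem IsCubePath.asyncArc_pathNetwork (h : IsCubePath w xs) {x y : Fin n → Bool}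
    (hxy : AsyncArc (pathNetwork w xs) x y) :
    ∃ k < w.length, x = xs.getD k default ∧ y = xs.getD (k + 1) default := by
  obtain ⟨i, hi, rfl⟩ := hxy
  obtain ⟨k, rfl, rfl⟩ : ∃ k : Fin w.length, xs.getD k default = x ∧ w.get k = i := by
    by_contra hk
    exact hi (by rw [pathNetwork, if_neg hk])
  exact ⟨k, k.isLt, rfl, h.updateStep_pathNetwork_get k.isLt⟩

theorem IsCubePath.pathNetwork_acyclic (h : IsCubePath w xs) (x : Fin n → Bool) :
    ¬ Relation.TransGen (AsyncArc (pathNetwork w xs)) x x := by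
  refine Relation.not_transGen_self_of_map_lt xs.idxOf (fun a b hab => ?_) x
  obtain ⟨k, hk, rfl, rfl⟩ := h.asyncArc_pathNetwork hab
  rw [h.idxOf_getD hk.le, h.idxOf_getD hk]
  exact k.lt_succ_self

theorem IsCubePath.exists_applyWord_pathNetwork (h : IsCubePath w xs) :
    ∀ (U : List (Fin n)) {k : ℕ}, k ≤ w.length →
      ∃ m, k ≤ m ∧ m ≤ w.length ∧
        applyWord (pathNetwork w xs) U (xs.getD k default) = xs.getD m default ∧
        ((w.drop k).take (m - k)).Sublist U
  | [], k, hk => ⟨k, le_rfl, hk, rfl, by simp⟩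
  | i :: U, k, hk => by
    by_cases hnext : ∃ hk' : k < w.length, i = w.get ⟨k, hk'⟩
    · obtain ⟨hk', rfl⟩ := hnext
      obtain ⟨m, hkm, hm, happ, hsub⟩ := h.exists_applyWord_pathNetwork U hk'
      refine ⟨m, by omega, hm, by rw [applyWord, h.updateStep_pathNetwork_get hk', happ], ?_⟩
      rw [List.drop_eq_getElem_cons hk', show m - k = m - (k + 1) + 1 by omega,
        List.take_succ_cons]
      exact hsub.cons_cons _
    · push Not at hnext
      obtain ⟨m, hkm, hm, happ, hsub⟩ := h.exists_applyWord_pathNetwork U hk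
      exact ⟨m, hkm, hm, by rw [applyWord, h.updateStep_pathNetwork_of_ne hk hnext, happ],
        hsub.cons _⟩

theorem IsCubePath.sublist_of_fixes_pathNetwork (h : IsCubePath w xs) {W : List (Fin n)}
    (hW : Fixes (pathNetwork w xs) W) : w.Sublist W := by
  obtain ⟨m, -, hm, happ, hsub⟩ := h.exists_applyWord_pathNetwork W (Nat.zero_le _)
  obtain rfl : m = w.length := by
    by_contra hne
    have hfix := congrFun (hW (xs.getD 0 default)) (w.get ⟨m, by omega⟩)
    rw [happ, pathNetwork_apply_get] at hfix
    exact Bool.not_ne_self _ hfix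
  simpa using hsub

end PathNetwork

variable {f : (Fin n → Bool) → (Fin n → Bool)}

theorem updateStep_eq_self {x : Fin n → Bool} {i : Fin n} (h : f x i = x i) :
    updateStep f x i = x := by
  rw [updateStep, h, Function.update_eq_self]

theorem updateStep_eq_flip {x : Fin n → Bool} {i : Fin n} (h : f x i ≠ x i) :
    updateStep f x i = Function.update x i (!x i) := by
  rw [updateStep, Bool.eq_not_of_ne h]

variable (f) in
def IsTrajectory : List (Fin n) → (Fin n → Bool) → Prop
  | [], _ => True
  | i :: w, x => f x i ≠ x i ∧ IsTrajectory w (Function.update x i (!x i))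

theorem isTrajectory_append {u v : List (Fin n)} {x : Fin n → Bool} :
    IsTrajectory f (u ++ v) x ↔ IsTrajectory f u x ∧ IsTrajectory f v (flipWord u x) := by
  induction u generalizing x with
  | nil => simp [IsTrajectory, flipWord]
  | cons i u ih => simp [IsTrajectory, flipWord, ih, and_assoc]

theorem isTrajectory_singleton {i : Fin n} {x : Fin n → Bool} :
    IsTrajectory f [i] x ↔ f x i ≠ x i := by
  simp [IsTrajectory]

theorem isChain_cubeWalk {u : List (Fin n)} {x : Fin n → Bool} (h : IsTrajectory f u x) :
    (cubeWalk u x).IsChain (AsyncArc f) := by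
  induction u generalizing x with
  | nil => exact List.isChain_singleton x
  | cons i u ih =>
    obtain ⟨hi, hu⟩ := h
    have harc : AsyncArc f x (Function.update x i (!x i)) :=
      ⟨i, hi, by rw [Bool.eq_not_of_ne hi]⟩
    cases u <;> exact .cons_cons harc (ih hu)

theorem isPathWord_of_isTrajectory (hf : ∀ x, ¬ Relation.TransGen (AsyncArc f) x x)
    {u : List (Fin n)} {x : Fin n → Bool} (h : IsTrajectory f u x) : IsPathWord n u :=
  isPathWord_of_nodup_cubeWalk ((isChain_cubeWalk h).nodup_of_acyclic hf)

variable (f) in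
def trace : List (Fin n) → (Fin n → Bool) → List (Fin n)
  | [], _ => []
  | i :: W, x => if f x i = x i then trace W x else i :: trace W (updateStep f x i)

theorem applyWord_eq_flipWord_trace (W : List (Fin n)) (x : Fin n → Bool) :
    applyWord f W x = flipWord (trace f W x) x := by
  induction W generalizing x with
  | nil => rfl
  | cons i W ih =>
    by_cases h : f x i = x i
    · rw [applyWord, updateStep_eq_self h, trace, if_pos h, ih]
    · rw [applyWord, trace, if_neg h, ih, flipWord, updateStep_eq_flip h]

theorem isTrajectory_trace (W : List (Fin n)) (x : Fin n → Bool) :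
    IsTrajectory f (trace f W x) x := by
  induction W generalizing x with
  | nil => trivial
  | cons i W ih =>
    by_cases h : f x i = x i
    · rw [trace, if_pos h]
      exact ih x
    · rw [trace, if_neg h]
      exact ⟨h, updateStep_eq_flip h ▸ ih _⟩

/-- The trace is the greedy embedding of trajectories into `W`. -/
theorem not_sublist_of_isTrajectory_trace_append {v : List (Fin n)} (hv : v ≠ []) :
    ∀ {W : List (Fin n)} {x : Fin n → Bool}, IsTrajectory f (trace f W x ++ v) x →
      ¬ (trace f W x ++ v).Sublist W
  | [], _, _, hs => hv (List.append_eq_nil_iff.mp (List.sublist_nil.mp hs)).2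
  | j :: W, x, htraj, hs => by
    by_cases hj : f x j = x j
    · rw [trace, if_pos hj] at htraj hs
      rcases List.sublist_cons_iff.mp hs with hs | ⟨r, hr, -⟩
      · exact not_sublist_of_isTrajectory_trace_append hv htraj hs
      · rw [hr] at htraj
        exact htraj.1 hj
    · rw [trace, if_neg hj, updateStep_eq_flip hj, List.cons_append] at htraj hs
      exact not_sublist_of_isTrajectory_trace_append hv htraj.2 (List.cons_sublist_cons.mp hs)

theorem fixes_of_pathUniversal (hf : ∀ x, ¬ Relation.TransGen (AsyncArc f) x x)
    {W : List (Fin n)} (hW : PathUniversal n W) : Fixes f W := by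
  intro x
  by_contra hne
  obtain ⟨i, hi⟩ := Function.ne_iff.mp hne
  rw [applyWord_eq_flipWord_trace] at hi
  have htraj : IsTrajectory f (trace f W x ++ [i]) x :=
    isTrajectory_append.mpr ⟨isTrajectory_trace W x, isTrajectory_singleton.mpr hi⟩
  exact not_sublist_of_isTrajectory_trace_append (List.cons_ne_nil i []) htraj
    (hW _ (isPathWord_of_isTrajectory hf htraj))

theorem fixesAcyclicFamily_iff_pathUniversal (W : List (Fin n)) :
    FixesAcyclicFamily n W ↔ PathUniversal n W :=
  ⟨fun hW _ ⟨_, hxs⟩ =>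
    IsCubePath.sublist_of_fixes_pathNetwork hxs (hW _ (IsCubePath.pathNetwork_acyclic hxs)),
   fun hW _ hf => fixes_of_pathUniversal hf hW⟩

end BoolNetwork

/-- every word fixing all asynchronous-acyclic `n`-component networks is
`n`-path-universal; consequently the fixing length of this family equals the minimum
length `Λ(n)` of an `n`-path-universal word. -/
theorem fixing_length_acyclic_eq_pathUniversal (n : ℕ) :
    (∀ W : List (Fin n), FixesAcyclicFamily n W → PathUniversal n W) ∧
      sInf {l : ℕ | ∃ W : List (Fin n), W.length = l ∧ FixesAcyclicFamily n W} =
        sInf {l : ℕ | ∃ W : List (Fin n), W.length = l ∧ PathUniversal n W} := by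
  refine ⟨fun W => (BoolNetwork.fixesAcyclicFamily_iff_pathUniversal W).mp, ?_⟩
  simp_rw [BoolNetwork.fixesAcyclicFamily_iff_pathUniversal]
end

section
/- Let G be a directed graph on n vertices with 2-feedback number τ := τ₂(G). Then the family of monotone Boolean networks with interaction graph contained in G can be fixed by a word of length at most τ·n² + 3n. -/
/-- `f_i` depends on coordinate `j`. -/
def DependsOnCoord {n : ℕ} (f : (Fin n → Bool) → (Fin n → Bool)) (i j : Fin n) : Prop :=
  ∃ x : Fin n → Bool, f (Function.update x j (!(x j))) i ≠ f x i

/-- The interaction graph of `f` is a subgraph of the directed graph `E`. -/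
def InteractionSubgraph {n : ℕ} (f : (Fin n → Bool) → (Fin n → Bool))
    (E : Fin n → Fin n → Prop) : Prop :=
  ∀ i j : Fin n, DependsOnCoord f i j → E j i

/-- `l` is a directed cycle of the digraph `E` contained in the vertex set `S`. -/
def IsDiCycle {n : ℕ} (E : Fin n → Fin n → Prop) (S : Set (Fin n))
    (l : List (Fin n)) : Prop :=
  l ≠ [] ∧ l.Nodup ∧ (∀ v ∈ l, v ∈ S) ∧ l.Chain' E ∧
    ∀ a b, l.head? = some a → l.getLast? = some b → E b a

/-!
Let `I` be a 2-feedback vertex set of size `τ` and `K` its complement. Every cycle inside `K` has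
length at most two, so a minimal nonempty in-closed subset of `K` (a source strong component) is
a tree of digons, and such a tree with a leaf `v` is fixed by `v w v` where `w` fixes the tree
without `v`: if the last update of `v` changes it, this was caused by its neighbour `p` moving to
the new value of `v`, so the change cannot destabilise `p`. Fixing the components in topological
order gives a word of length `2 |K|` that fixes all of `K`.

The vertices `i` of `I` are then added one at a time to a set `S` on which the state is fixed.
After updating `i` to the value `b`, every coordinate of `S ∪ {i}` that holds `b` keeps `b` when
updated, and monotonicity preserves this under updates inside `S ∪ {i}`. So a pass through
`S ∪ {i}` either changes nothing, and the state is fixed on `S ∪ {i}`, or increases the number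
of coordinates equal to `b`; hence `|S ∪ {i}| ≤ n` passes suffice. In total the length is `2 (n - τ) + τ (n² + 1) ≤ τ n² + 3 n`.
-/

open Function Finset

theorem Bool.eq_of_ne_of_ne {a b c : Bool} (ha : a ≠ c) (hb : b ≠ c) : a = b :=
  (Bool.eq_not_iff.mpr ha).trans (Bool.eq_not_iff.mpr hb).symm

namespace BoolNet

variable {n : ℕ} {f : (Fin n → Bool) → (Fin n → Bool)}

@[simp] theorem applyWord_nil (x : Fin n → Bool) : applyWord f [] x = x := rfl

@[simp] theorem applyWord_cons (i : Fin n) (w : List (Fin n)) (x : Fin n → Bool) :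
    applyWord f (i :: w) x = applyWord f w (updateStep f x i) := rfl

theorem applyWord_append (w₁ w₂ : List (Fin n)) (x : Fin n → Bool) :
    applyWord f (w₁ ++ w₂) x = applyWord f w₂ (applyWord f w₁ x) := by
  induction w₁ generalizing x with
  | nil => rfl
  | cons i w ih => exact ih _

theorem applyWord_apply_of_notMem {w : List (Fin n)} {a : Fin n} (ha : a ∉ w)
    (x : Fin n → Bool) : applyWord f w x a = x a := by
  induction w generalizing x with
  | nil => rfl
  | cons i w ih =>
    rw [List.mem_cons, not_or] at ha
    rw [applyWord_cons, ih ha.2, updateStep, update_of_ne ha.1]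

theorem updateStep_eq_self {x : Fin n → Bool} {i : Fin n} (h : f x i = x i) :
    updateStep f x i = x := by
  rw [updateStep, h, update_eq_self]

theorem applyWord_eq_self {w : List (Fin n)} {x : Fin n → Bool} (h : ∀ a ∈ w, f x a = x a) :
    applyWord f w x = x := by
  induction w with
  | nil => rfl
  | cons i w ih =>
    rw [List.forall_mem_cons] at h
    rw [applyWord_cons, updateStep_eq_self h.1, ih h.2]

theorem apply_update_of_apply_eq (hf : Monotone f) {x : Fin n → Bool} {i j : Fin n} {b : Bool}
    (h : f x i = b) : f (update x j b) i = b := by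
  cases b
  · exact le_bot_iff.mp ((hf (update_le_self_iff.mpr (Bool.false_le _)) i).trans h.le)
  · exact top_le_iff.mp (h.ge.trans (hf (le_update_self_iff.mpr (Bool.le_true _)) i))

theorem apply_updateStep_self (hf : Monotone f) (x : Fin n → Bool) (i : Fin n) :
    f (updateStep f x i) i = f x i :=
  apply_update_of_apply_eq hf rfl

theorem apply_update_of_not_dependsOnCoord {i j : Fin n} (h : ¬DependsOnCoord f i j)
    (x : Fin n → Bool) (b : Bool) : f (update x j b) i = f x i := by
  by_cases hb : b = x j
  · rw [hb, update_eq_self]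
  · rw [Bool.eq_not_iff.mpr hb]
    by_contra hne
    exact h ⟨x, hne⟩

theorem apply_eq_of_forall_dependsOnCoord {i : Fin n} {x y : Fin n → Bool}
    (h : ∀ j, DependsOnCoord f i j → x j = y j) : f x i = f y i := by
  suffices ∀ D : Finset (Fin n), ∀ x : Fin n → Bool, (∀ j ∉ D, x j = y j) →
      (∀ j ∈ D, ¬DependsOnCoord f i j) → f x i = f y i from
    this {j | x j ≠ y j} x (by simp) fun j hj hd => (mem_filter.mp hj).2 (h j hd)
  intro D
  induction D using Finset.induction_on with
  | empty => intro x hx _; rw [funext fun j => hx j (notMem_empty j)]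
  | insert j D hj ih =>
    intro x hx hD
    rw [← apply_update_of_not_dependsOnCoord (hD j (mem_insert_self j D)) x (y j)]
    refine ih _ (fun k hk => ?_) fun k hk => hD k (mem_insert_of_mem hk)
    by_cases hkj : k = j
    · rw [hkj, update_self]
    · rw [update_of_ne hkj]
      exact hx k (by simp [hkj, hk])

theorem _root_.InteractionSubgraph.apply_eq {E : Fin n → Fin n → Prop}
    (hE : InteractionSubgraph f E) {i : Fin n} {x y : Fin n → Bool}
    (h : ∀ j, E j i → x j = y j) : f x i = f y i :=
  apply_eq_of_forall_dependsOnCoord fun j hj => h j (hE i j hj)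

section Passes

def FixedOn (f : (Fin n → Bool) → (Fin n → Bool)) (S : Finset (Fin n)) (x : Fin n → Bool) :
    Prop :=
  ∀ u ∈ S, f x u = x u

def StableOn (f : (Fin n → Bool) → (Fin n → Bool)) (b : Bool) (S : Finset (Fin n))
    (x : Fin n → Bool) : Prop :=
  ∀ u ∈ S, x u = b → f x u = b

def countOn (b : Bool) (S : Finset (Fin n)) (x : Fin n → Bool) : ℕ :=
  #{u ∈ S | x u = b}

variable {S : Finset (Fin n)} {x : Fin n → Bool} {b : Bool} {i : Fin n} {w : List (Fin n)}

theorem FixedOn.stableOn_updateStep (hf : Monotone f) (hx : FixedOn f S x) (i : Fin n) :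
    StableOn f (f x i) (insert i S) (updateStep f x i) := by
  intro u hu hyu
  by_cases hui : u = i
  · subst hui
    exact apply_updateStep_self hf x u
  · rw [updateStep, update_of_ne hui] at hyu
    exact apply_update_of_apply_eq hf ((hx u ((mem_insert.mp hu).resolve_left hui)).trans hyu)

theorem StableOn.step (hf : Monotone f) (hx : StableOn f b S x) (hi : i ∈ S) :
    StableOn f b S (updateStep f x i) := by
  by_cases hb : f x i = b
  · intro u hu hyu
    rw [updateStep, hb] at hyu ⊢
    by_cases hui : u = i
    · subst hui
      exact apply_update_of_apply_eq hf hb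
    · rw [update_of_ne hui] at hyu
      exact apply_update_of_apply_eq hf (hx u hu hyu)
  · rwa [updateStep_eq_self (Bool.eq_of_ne_of_ne hb (mt (hx i hi) hb))]

theorem StableOn.word (hf : Monotone f) (hx : StableOn f b S x) (hw : ∀ a ∈ w, a ∈ S) :
    StableOn f b S (applyWord f w x) := by
  induction w generalizing x with
  | nil => exact hx
  | cons i w ih =>
    rw [List.forall_mem_cons] at hw
    exact ih (hx.step hf hw.1) hw.2

theorem StableOn.countOn_lt_updateStep (hx : StableOn f b S x) (hi : i ∈ S)
    (hne : f x i ≠ x i) : countOn b S x < countOn b S (updateStep f x i) := by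
  have hxi : x i ≠ b := fun h => hne (by rw [hx i hi h, h])
  have hfi : f x i = b := Bool.eq_of_ne_of_ne hne (Ne.symm hxi)
  refine card_lt_card ((ssubset_iff_of_subset fun u hu => ?_).mpr ⟨i, ?_, ?_⟩)
  · rw [mem_filter] at hu ⊢
    have hui : u ≠ i := by
      rintro rfl
      exact hxi hu.2
    rwa [updateStep, update_of_ne hui]
  · simp [hi, updateStep, hfi]
  · simp [hxi]

theorem StableOn.forall_or_countOn_lt (hf : Monotone f) (hx : StableOn f b S x)
    (hw : ∀ a ∈ w, a ∈ S) :
    (∀ a ∈ w, f x a = x a) ∨ countOn b S x < countOn b S (applyWord f w x) := by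
  induction w generalizing x with
  | nil => simp
  | cons i w ih =>
    rw [List.forall_mem_cons] at hw ⊢
    rw [applyWord_cons]
    by_cases hi : f x i = x i
    · rw [updateStep_eq_self hi]
      exact (ih hx hw.2).imp (fun h => ⟨hi, h⟩) id
    · right
      refine (hx.countOn_lt_updateStep hw.1 hi).trans_le ?_
      rcases ih (hx.step hf hw.1) hw.2 with h | h
      · rw [applyWord_eq_self h]
      · exact h.le

theorem StableOn.fixedOn_applyWord_flatten_replicate (hf : Monotone f) (hx : StableOn f b S x)
    (hw : ∀ a ∈ w, a ∈ S) (hS : ∀ a ∈ S, a ∈ w) {j : ℕ} (hj : #S ≤ countOn b S x + j) :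
    FixedOn f S (applyWord f (List.replicate j w).flatten x) := by
  induction j generalizing x with
  | zero =>
    have hall : ∀ u ∈ S, x u = b := card_filter_eq_iff.mp (le_antisymm (card_filter_le _ _) hj)
    exact fun u hu => (hx u hu (hall u hu)).trans (hall u hu).symm
  | succ j ih =>
    rw [List.replicate_succ, List.flatten_cons, applyWord_append]
    rcases hx.forall_or_countOn_lt hf hw with hfix | hlt
    · have hxS : FixedOn f S x := fun u hu => hfix u (hS u hu)
      rw [applyWord_eq_self hfix, applyWord_eq_self fun a ha => hxS a (hw a (by simp_all))]
      exact hxS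
    · exact ih (hx.word hf hw) (by omega)

noncomputable def passes (S : Finset (Fin n)) : List (Fin n) :=
  (List.replicate #S S.toList).flatten

theorem exists_word_fixedOn_union (S J : Finset (Fin n)) :
    ∃ w : List (Fin n), w.length ≤ #J * (n ^ 2 + 1) ∧
      ∀ f : (Fin n → Bool) → (Fin n → Bool), Monotone f →
        ∀ x, FixedOn f S x → FixedOn f (S ∪ J) (applyWord f w x) := by
  induction J using Finset.induction_on with
  | empty => exact ⟨[], by simp, fun f _ x hx => by simpa using hx⟩
  | insert i J hi ih =>
    obtain ⟨w, hwlen, hw⟩ := ih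
    refine ⟨w ++ i :: passes (insert i (S ∪ J)), ?_, fun f hf x hx => ?_⟩
    · have hT : #(insert i (S ∪ J)) ≤ n := (card_le_univ _).trans_eq (Fintype.card_fin n)
      simp only [passes, List.length_append, List.length_cons, List.length_flatten,
        List.map_replicate, List.sum_replicate, length_toList, smul_eq_mul,
        card_insert_of_notMem hi]
      nlinarith
    · rw [union_insert, applyWord_append, applyWord_cons]
      exact StableOn.fixedOn_applyWord_flatten_replicate hf
        (FixedOn.stableOn_updateStep hf (hw f hf x hx) i)
        (fun a ha => mem_toList.mp ha) (fun a ha => mem_toList.mpr ha) (Nat.le_add_left _ _)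

end Passes

section Graph

variable {E : Fin n → Fin n → Prop}

def IsDiPath (E : Fin n → Fin n → Prop) (S : Set (Fin n)) (l : List (Fin n)) : Prop :=
  l.Nodup ∧ (∀ v ∈ l, v ∈ S) ∧ l.IsChain E

theorem IsDiPath.infix {S : Set (Fin n)} {l l' : List (Fin n)} (hl : IsDiPath E S l)
    (h : l' <:+: l) : IsDiPath E S l' :=
  ⟨hl.1.sublist h.sublist, fun v hv => hl.2.1 v (h.subset hv), hl.2.2.infix h⟩

theorem IsDiPath.cons {S : Set (Fin n)} {a u : Fin n} {l : List (Fin n)}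
    (hl : IsDiPath E S (u :: l)) (ha : a ∉ u :: l) (haS : a ∈ S) (hau : E a u) :
    IsDiPath E S (a :: u :: l) :=
  ⟨List.nodup_cons.mpr ⟨ha, hl.1⟩, List.forall_mem_cons.mpr ⟨haS, hl.2.1⟩, hl.2.2.cons_cons hau⟩

theorem IsDiPath.isDiCycle {S : Set (Fin n)} {l : List (Fin n)} (hl : IsDiPath E S l)
    (hne : l ≠ []) (hclose : ∀ a b, l.head? = some a → l.getLast? = some b → E b a) :
    IsDiCycle E S l :=
  ⟨hne, hl.1, hl.2.1, hl.2.2, hclose⟩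

theorem IsDiCycle.mono {S T : Set (Fin n)} {l : List (Fin n)} (hl : IsDiCycle E S l)
    (hST : S ⊆ T) : IsDiCycle E T l :=
  ⟨hl.1, hl.2.1, fun v hv => hST (hl.2.2.1 v hv), hl.2.2.2⟩

/-- If `c` is already on the path, cut the path at `c`. -/
theorem IsDiPath.exists_head_of_arc {S : Set (Fin n)} {l : List (Fin n)} {u a c : Fin n}
    (hl : IsDiPath E S l) (hlu : l.head? = some u) (hla : l.getLast? = some a) (hc : c ∈ S)
    (hcu : E c u) : ∃ l', IsDiPath E S l' ∧ l'.head? = some c ∧ l'.getLast? = some a := by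
  obtain ⟨l, rfl⟩ : ∃ l', l = u :: l' := by
    cases l with
    | nil => simp at hlu
    | cons u' l' => exact ⟨l', by simpa using hlu⟩
  by_cases hcl : c ∈ u :: l
  · obtain ⟨s, t, hst⟩ := List.append_of_mem hcl
    rw [hst] at hl hla
    exact ⟨c :: t, hl.infix (List.suffix_append s (c :: t)).isInfix, rfl,
      by simpa [List.getLast?_cons] using hla⟩
  · exact ⟨c :: u :: l, hl.cons hcl hc hcu, rfl, by simpa using hla⟩

/-- The first vertex of a longest path has no in-neighbour off the path, and an arc into it from
beyond the second vertex would close a cycle of length at least three. -/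
theorem exists_forall_inNeighbor_eq {B : Finset (Fin n)} (hB : B.Nonempty)
    (hcirc : ∀ l, IsDiCycle E ↑B l → l.length ≤ 2) :
    ∃ v ∈ B, ∃ p, ∀ u ∈ B, u ≠ v → E u v → u = p := by
  classical
  obtain ⟨v₀, hv₀⟩ := hB
  have hv₀path : IsDiPath E ↑B [v₀] :=
    ⟨List.nodup_singleton _, by simpa using hv₀, List.isChain_singleton _⟩
  have hlen : ∀ l, IsDiPath E ↑B l → l.length ≤ #B := fun l hl =>
    (List.toFinset_card_of_nodup hl.1).symm.trans_le
      (card_le_card fun v hv => hl.2.1 v (List.mem_toFinset.mp hv))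
  obtain ⟨l, hl, hlm⟩ := Nat.findGreatest_spec (P := fun m => ∃ l, IsDiPath E ↑B l ∧ l.length = m)
    (hlen [v₀] hv₀path) ⟨[v₀], hv₀path, rfl⟩
  have hmax : ∀ l', IsDiPath E ↑B l' → l'.length ≤ l.length := fun l' hl' =>
    hlm ▸ Nat.le_findGreatest (hlen l' hl') ⟨l', hl', rfl⟩
  obtain ⟨v, t, rfl⟩ := List.exists_cons_of_length_pos (hmax [v₀] hv₀path)
  refine ⟨v, hl.2.1 v List.mem_cons_self, t.headD v, fun u hu huv huE => ?_⟩
  have hut : u ∈ t := by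
    by_contra hut
    have := hmax _ (hl.cons (by simp [huv, hut]) hu huE)
    simp at this
  obtain ⟨t₁, t₂, rfl⟩ := List.append_of_mem hut
  cases t₁ with
  | nil => rfl
  | cons q t₁ =>
    have hcyc : IsDiCycle E ↑B (v :: q :: t₁ ++ [u]) :=
      (hl.infix ⟨[], t₂, by simp⟩).isDiCycle (by simp) fun a b ha hb => by
        simp only [List.cons_append, List.head?_cons, Option.some.injEq] at ha
        simp only [List.getLast?_append, List.getLast?_singleton, Option.some_or,
          Option.some.injEq] at hb
        exact ha ▸ hb ▸ huE
    have := hcirc _ hcyc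
    simp at this

/-- A minimal nonempty in-closed subset of `K` is strongly connected, so each of its arcs lies on
a cycle, which has length two. -/
theorem exists_inClosed_symmetric {K : Finset (Fin n)} (hK : K.Nonempty)
    (hcirc : ∀ l, IsDiCycle E ↑K l → l.length ≤ 2) :
    ∃ B ⊆ K, B.Nonempty ∧ (∀ u ∈ B, ∀ a ∈ K, E a u → a ∈ B) ∧
      ∀ a ∈ B, ∀ b ∈ B, E a b → E b a := by
  classical
  obtain ⟨B, hB, hmin⟩ := (K.powerset.filter fun B =>
      B.Nonempty ∧ ∀ u ∈ B, ∀ a ∈ K, E a u → a ∈ B).exists_min_image card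
    ⟨K, mem_filter.mpr ⟨mem_powerset_self K, hK, fun _ _ a ha _ => ha⟩⟩
  simp only [mem_filter, mem_powerset] at hB hmin
  obtain ⟨hBK, hBne, hBcl⟩ := hB
  refine ⟨B, hBK, hBne, hBcl, fun a ha b hb hab => ?_⟩
  set R := B.filter fun u => ∃ l, IsDiPath E ↑K l ∧ l.head? = some u ∧ l.getLast? = some a
  have hR : ∀ u ∈ R, ∀ c ∈ K, E c u → c ∈ R := fun u hu c hc hcu => by
    obtain ⟨huB, l, hl, hlu, hla⟩ := mem_filter.mp hu
    exact mem_filter.mpr ⟨hBcl u huB c hc hcu, hl.exists_head_of_arc hlu hla hc hcu⟩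
  have hRB : R = B := eq_of_subset_of_card_le (filter_subset _ _)
    (hmin R ⟨(filter_subset _ _).trans hBK,
      ⟨a, mem_filter.mpr ⟨ha, [a], ⟨List.nodup_singleton a, by simpa using hBK ha,
        List.isChain_singleton a⟩, rfl, rfl⟩⟩, hR⟩)
  obtain ⟨l, hl, hlb, hla⟩ := (mem_filter.mp (hRB ▸ hb : b ∈ R)).2
  have hlen := hcirc l (hl.isDiCycle (by rintro rfl; simp at hlb) fun x y hx hy => by
    rw [hlb, Option.some.injEq] at hx
    rw [hla, Option.some.injEq] at hy
    exact hx ▸ hy ▸ hab)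
  match l, hl, hlb, hla, hlen with
  | [c], _, hlb, hla, _ =>
    simp only [List.head?_cons, List.getLast?_singleton, Option.some.injEq] at hlb hla
    subst hlb hla
    exact hab
  | [c, d], hl, hlb, hla, _ =>
    simp only [List.head?_cons, List.getLast?_cons_cons, List.getLast?_singleton,
      Option.some.injEq] at hlb hla
    subst hlb hla
    exact List.isChain_pair.mp hl.2.2
  | _ :: _ :: _ :: _, _, _, _, hlen => simp at hlen

end Graph

section FixingWords

variable {E : Fin n → Fin n → Prop}

def IsFixingWordOn (E : Fin n → Fin n → Prop) (S : Finset (Fin n)) (w : List (Fin n)) : Prop :=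
  (∀ a ∈ w, a ∈ S) ∧ ∀ f : (Fin n → Bool) → (Fin n → Bool), Monotone f →
    InteractionSubgraph f E → ∀ x, FixedOn f S (applyWord f w x)

theorem isFixingWordOn_empty : IsFixingWordOn E ∅ [] :=
  ⟨by simp, fun _ _ _ _ => by simp [FixedOn]⟩

theorem eq_apply_of_apply_ne_self (hf : Monotone f) (hE : InteractionSubgraph f E)
    {B : Finset (Fin n)} {v p : Fin n} {y z : Fin n → Bool} (hv : v ∉ B)
    (hp : ∀ j ∈ B, E j v → j = p) (hzy : ∀ a ∉ B, z a = y a) (hy : f y v = y v)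
    (hz : f z v ≠ z v) : z p = f z v := by
  by_contra hne
  apply hz
  have hpy : z p = f y v := by
    rw [hy, ← hzy v hv]
    exact Bool.eq_of_ne_of_ne hne (Ne.symm hz)
  calc f z v = f (update y p (z p)) v := hE.apply_eq fun j hj => by
          by_cases hjp : j = p
          · rw [hjp, update_self]
          · rw [update_of_ne hjp, hzy j fun hjB => hjp (hp j hjB hj)]
    _ = z v := by rw [hpy, apply_update_of_apply_eq hf rfl, hy, hzy v hv]

theorem IsFixingWordOn.cons_append_singleton {B : Finset (Fin n)} {w : List (Fin n)}
    {v p : Fin n} (hw : IsFixingWordOn E B w) (hv : v ∉ B)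
    (hp : ∀ u ∈ B, E u v ∨ E v u → u = p) : IsFixingWordOn E (insert v B) (v :: w ++ [v]) := by
  refine ⟨fun a ha => ?_, fun f hf hE x => ?_⟩
  · simp only [List.cons_append, List.mem_cons, List.mem_append] at ha
    obtain rfl | ha | rfl | ha := ha
    exacts [mem_insert_self a B, mem_insert_of_mem (hw.1 a ha), mem_insert_self a B,
      absurd ha List.not_mem_nil]
  set y := updateStep f x v
  set z := applyWord f w y
  have hzB : FixedOn f B z := hw.2 f hf hE y
  rw [List.cons_append, applyWord_cons, applyWord_append]
  change FixedOn f (insert v B) (updateStep f z v)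
  by_cases hzv : f z v = z v
  · rw [updateStep_eq_self hzv]
    exact forall_mem_insert _ _ _ |>.mpr ⟨hzv, hzB⟩
  have hpz : z p = f z v := eq_apply_of_apply_ne_self hf hE hv (fun j hj hjv => hp j hj (.inl hjv))
    (fun a ha => applyWord_apply_of_notMem (fun h => ha (hw.1 a h)) y)
    ((apply_updateStep_self hf x v).trans (update_self v _ x).symm) hzv
  intro u hu
  rcases mem_insert.mp hu with rfl | hu
  · rw [apply_updateStep_self hf, updateStep, update_self]
  have huv : u ≠ v := fun h => hv (h ▸ hu)
  rw [updateStep, update_of_ne huv]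
  by_cases hup : u = p
  · subst hup
    rw [hpz]
    exact apply_update_of_apply_eq hf ((hzB u hu).trans hpz)
  · rw [← hzB u hu]
    exact hE.apply_eq fun j hj =>
      update_of_ne (fun hjv => hup (hp u hu (.inr (by rwa [← hjv])))) _ _

theorem IsFixingWordOn.append {B C : Finset (Fin n)} {w₁ w₂ : List (Fin n)}
    (h₁ : IsFixingWordOn E B w₁) (h₂ : IsFixingWordOn E C w₂)
    (hBC : ∀ u ∈ B, ∀ a ∈ C, ¬E a u) : IsFixingWordOn E (B ∪ C) (w₁ ++ w₂) := by
  refine ⟨fun a ha => ?_, fun f hf hE x u hu => ?_⟩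
  · rcases List.mem_append.mp ha with ha | ha
    exacts [mem_union_left _ (h₁.1 a ha), mem_union_right _ (h₂.1 a ha)]
  rw [applyWord_append]
  set z := applyWord f w₁ x
  have hz : ∀ a ∉ C, applyWord f w₂ z a = z a := fun a ha =>
    applyWord_apply_of_notMem (fun h => ha (h₂.1 a h)) z
  by_cases huC : u ∈ C
  · exact h₂.2 f hf hE z u huC
  have huB := (mem_union.mp hu).resolve_right huC
  have hzu : f z u = z u := h₁.2 f hf hE x u huB
  rw [hz u huC, ← hzu]
  exact hE.apply_eq fun j hj => hz j fun hjC => hBC u huB j hjC hj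

theorem exists_isFixingWordOn_of_symmetric {B : Finset (Fin n)}
    (hsymm : ∀ a ∈ B, ∀ b ∈ B, E a b → E b a) (hcirc : ∀ l, IsDiCycle E ↑B l → l.length ≤ 2) :
    ∃ w : List (Fin n), w.length = 2 * #B ∧ IsFixingWordOn E B w := by
  induction B using Finset.strongInduction with
  | H B ih =>
  rcases B.eq_empty_or_nonempty with rfl | hB
  · exact ⟨[], rfl, isFixingWordOn_empty⟩
  obtain ⟨v, hv, p, hp⟩ := exists_forall_inNeighbor_eq hB hcirc
  obtain ⟨w, hwlen, hw⟩ := ih (B.erase v) (erase_ssubset hv)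
    (fun a ha b hb => hsymm a (mem_of_mem_erase ha) b (mem_of_mem_erase hb))
    fun l hl => hcirc l (IsDiCycle.mono hl (coe_subset.mpr (erase_subset v B)))
  refine ⟨v :: w ++ [v], ?_, ?_⟩
  · simp only [List.cons_append, List.length_cons, List.length_append, List.length_nil, hwlen,
      card_erase_of_mem hv]
    have := card_pos.mpr hB
    omega
  · have := hw.cons_append_singleton (notMem_erase v B) fun u hu huv =>
      hp u (mem_of_mem_erase hu) (ne_of_mem_erase hu)
        (huv.elim id (hsymm v hv u (mem_of_mem_erase hu)))
    rwa [insert_erase hv] at this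

theorem exists_isFixingWordOn {K : Finset (Fin n)}
    (hcirc : ∀ l, IsDiCycle E ↑K l → l.length ≤ 2) :
    ∃ w : List (Fin n), w.length ≤ 2 * #K ∧ IsFixingWordOn E K w := by
  induction K using Finset.strongInduction with
  | H K ih =>
  rcases K.eq_empty_or_nonempty with rfl | hK
  · exact ⟨[], by simp, isFixingWordOn_empty⟩
  obtain ⟨B, hBK, hB, hBcl, hsymm⟩ := exists_inClosed_symmetric hK hcirc
  obtain ⟨w₁, hw₁len, hw₁⟩ := exists_isFixingWordOn_of_symmetric hsymm
    fun l hl => hcirc l (IsDiCycle.mono hl (coe_subset.mpr hBK))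
  obtain ⟨w₂, hw₂len, hw₂⟩ := ih (K \ B) (sdiff_ssubset hBK hB)
    fun l hl => hcirc l (IsDiCycle.mono hl (coe_subset.mpr sdiff_subset))
  refine ⟨w₁ ++ w₂, ?_, ?_⟩
  · rw [card_sdiff_of_subset hBK] at hw₂len
    rw [List.length_append]
    have := card_le_card hBK
    omega
  · have := hw₁.append hw₂ fun u hu a ha hau =>
      (mem_sdiff.mp ha).2 (hBcl u hu a (mem_sdiff.mp ha).1 hau)
    rwa [union_sdiff_of_subset hBK] at this

end FixingWords

end BoolNet

/-- if `τ` is the 2-feedback number of the digraph `E` on `n` vertices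
(the minimum size of a vertex set whose removal leaves circumference at most 2), then
the family of monotone networks with interaction graph contained in `E` is fixed by a
word of length at most `τ n² + 3n`. -/
theorem monotone_fixing_word_feedback (n τ : ℕ) (E : Fin n → Fin n → Prop)
    (hτ : IsLeast {m : ℕ | ∃ I : Finset (Fin n), I.card = m ∧
        ∀ l : List (Fin n), IsDiCycle E (↑I)ᶜ l → l.length ≤ 2} τ) :
    ∃ W : List (Fin n), W.length ≤ τ * n ^ 2 + 3 * n ∧
      ∀ f : (Fin n → Bool) → (Fin n → Bool),
        Monotone f → InteractionSubgraph f E → Fixes f W := by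
  obtain ⟨I, rfl, hI⟩ := hτ.1
  obtain ⟨w₀, hw₀len, hw₀⟩ := BoolNet.exists_isFixingWordOn (K := Iᶜ) (by simpa using hI)
  obtain ⟨w₁, hw₁len, hw₁⟩ := BoolNet.exists_word_fixedOn_union Iᶜ I
  refine ⟨w₀ ++ w₁, ?_, fun f hf hE x => funext fun u => ?_⟩
  · have hIn : #I ≤ n := (card_le_univ I).trans_eq (Fintype.card_fin n)
    rw [card_compl, Fintype.card_fin] at hw₀len
    rw [mul_add, mul_one] at hw₁len
    rw [List.length_append]
    omega
  · rw [BoolNet.applyWord_append]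
    exact hw₁ f hf _ (hw₀.2 f hf hE x) u (by simpa using em' (u ∈ I))
end

section
/- For fixed k ≥ 0, the minimum length λ_k(n) of an (n,k)-universal word satisfies λ_k(n) ≤ (n-1)(n-k) + 1 and λ_k(n) ≥ λ(n) - (n-1)k - 1, where λ(n) is the minimum length of an n-universal word. Consequently λ_k(n) = n² - o(n²). -/
/-!
The zigzag word `0, 1, …, p, p - 1, …, 0, 1, …` over `Fin (p + 1)`, made of `m` monotone
sweeps of `p` steps, contains every word of length at most `m` whose consecutive letters
differ: read the `j`-th letter in the `j`-th sweep. Consecutive sweeps share only an endpoint,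
and two distinct consecutive letters cannot both sit there, so the reading times increase.
With `m = n - k` this gives the upper bound. Concatenating a shortest `(n,k)`-universal word
with the zigzag `(n,n-k)`-universal word gives an `n`-universal word, hence the lower bound.
Finally `n² - λ_k(n)` is squeezed between `-(kn + 1)` and `(n² - λ(n)) + kn + 1`.
-/

open Asymptotics Filter

/-- A word over alphabet `[n]` is `(n,k)`-universal if it contains as subwords all
words of length `n - k` without repeated letters. -/
def NKUniversal (n k : ℕ) (W : List (Fin n)) : Prop :=
  ∀ u : List (Fin n), u.Nodup → u.length = n - k → u.Sublist W

/-- `λ_k(n)`: the minimum length of an `(n,k)`-universal word. -/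
noncomputable def lamK (n k : ℕ) : ℕ :=
  sInf {l : ℕ | ∃ W : List (Fin n), W.length = l ∧ NKUniversal n k W}

def zigzagLetter (p t : ℕ) : Fin (p + 1) :=
  if Even (t / p) then Fin.ofNat (p + 1) (t % p) else (Fin.ofNat (p + 1) (t % p)).rev

def sweepTime (p j : ℕ) (a : Fin (p + 1)) : ℕ :=
  j * p + (if Even j then a else a.rev : Fin (p + 1))

lemma zigzagLetter_mul_add (p j x : ℕ) (hx : x ≤ p) :
    zigzagLetter p (j * p + x) =
      if Even j then Fin.ofNat (p + 1) x else (Fin.ofNat (p + 1) x).rev := by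
  rcases Nat.eq_zero_or_pos p with rfl | hp
  · exact Subsingleton.elim (α := Fin 1) _ _
  rcases hx.lt_or_eq with hx | rfl
  · have hdiv : (j * p + x) / p = j := by
      rw [add_comm, Nat.add_mul_div_right _ _ hp, Nat.div_eq_of_lt hx, zero_add]
    simp [zigzagLetter, hdiv, Nat.mod_eq_of_lt hx]
  · rw [← Nat.succ_mul]
    by_cases hj : Even j <;> simp [zigzagLetter, hp.ne', hj, Nat.even_add_one]

lemma zigzagLetter_sweepTime (p j : ℕ) (a : Fin (p + 1)) :
    zigzagLetter p (sweepTime p j a) = a := by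
  rw [sweepTime, zigzagLetter_mul_add _ _ _ (Nat.le_of_lt_succ (Fin.is_lt _))]
  split_ifs <;> simp only [Fin.ofNat_val_eq_self, Fin.rev_rev]

lemma sweepTime_lt_sweepTime_succ (p j : ℕ) {a b : Fin (p + 1)} (hab : a ≠ b) :
    sweepTime p j a < sweepTime p (j + 1) b := by
  have hab' := Fin.val_ne_iff.mpr hab
  have ha := a.is_lt
  have hb := b.is_lt
  by_cases hj : Even j <;> simp [sweepTime, hj, Nat.even_add_one, Nat.succ_mul] <;> omega

lemma sweepTime_le (p j : ℕ) (a : Fin (p + 1)) : sweepTime p j a ≤ (j + 1) * p := by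
  rw [sweepTime, Nat.succ_mul]
  exact Nat.add_le_add_left (Nat.le_of_lt_succ (Fin.is_lt _)) _

def sweepTimes (p : ℕ) : ℕ → List (Fin (p + 1)) → List ℕ
  | _, [] => []
  | j, a :: u => sweepTime p j a :: sweepTimes p (j + 1) u

lemma map_zigzagLetter_sweepTimes (p j : ℕ) (u : List (Fin (p + 1))) :
    (sweepTimes p j u).map (zigzagLetter p) = u := by
  induction u generalizing j with
  | nil => rfl
  | cons a u ih => simp [sweepTimes, zigzagLetter_sweepTime, ih]

lemma isChain_sweepTimes (p j : ℕ) {u : List (Fin (p + 1))} (hu : u.IsChain (· ≠ ·)) :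
    (sweepTimes p j u).IsChain (· < ·) := by
  induction u generalizing j with
  | nil => exact .nil
  | cons a u ih =>
    cases u with
    | nil => exact .singleton _
    | cons b u =>
      rw [List.isChain_cons_cons] at hu
      exact .cons_cons (sweepTime_lt_sweepTime_succ p j hu.1) (ih (j + 1) hu.2)

lemma le_of_mem_sweepTimes (p j : ℕ) {u : List (Fin (p + 1))} {t : ℕ}
    (ht : t ∈ sweepTimes p j u) : t ≤ (j + u.length) * p := by
  induction u generalizing j with
  | nil => simp [sweepTimes] at ht
  | cons a u ih =>
    rcases List.mem_cons.mp ht with rfl | ht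
    · exact (sweepTime_le p j a).trans (Nat.mul_le_mul_right _ (by simp))
    · simpa [add_assoc, add_comm 1] using ih (j + 1) ht

/-- The paper's word `1, u¹, …, uᵐ` over `[p + 1]`, with every letter shifted down by one. -/
def zigzag (p m : ℕ) : List (Fin (p + 1)) :=
  (List.range (m * p + 1)).map (zigzagLetter p)

lemma length_zigzag (p m : ℕ) : (zigzag p m).length = m * p + 1 := by simp [zigzag]

theorem sublist_zigzag {p m : ℕ} {u : List (Fin (p + 1))} (hu : u.IsChain (· ≠ ·))
    (hm : u.length ≤ m) : u.Sublist (zigzag p m) := by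
  have hsorted : (sweepTimes p 0 u).Pairwise (· < ·) :=
    List.isChain_iff_pairwise.mp (isChain_sweepTimes p 0 hu)
  have htimes : (sweepTimes p 0 u).Sublist (List.range (m * p + 1)) := by
    refine List.sublist_of_subperm_of_pairwise (List.subperm_of_subset hsorted.nodup ?_)
      hsorted List.pairwise_lt_range
    intro t ht
    have := le_of_mem_sweepTimes p 0 ht
    rw [List.mem_range, zero_add] at *
    exact Nat.lt_succ_of_le (this.trans (Nat.mul_le_mul_right _ hm))
  simpa [zigzag, map_zigzagLetter_sweepTimes] using htimes.map (zigzagLetter p)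

theorem nkUniversal_zigzag (p k : ℕ) : NKUniversal (p + 1) k (zigzag p (p + 1 - k)) :=
  fun _ hu hlen => sublist_zigzag hu.isChain hlen.le

theorem exists_nkUniversal_length_le (n k : ℕ) :
    ∃ W, NKUniversal n k W ∧ W.length ≤ (n - 1) * (n - k) + 1 := by
  cases n with
  | zero =>
    refine ⟨[], fun u _ hlen => ?_, by simp⟩
    rw [List.eq_nil_of_length_eq_zero (hlen.trans (Nat.zero_sub k))]
  | succ p => exact ⟨_, nkUniversal_zigzag p k, by simp [length_zigzag, mul_comm]⟩

theorem NKUniversal.append {n k : ℕ} {W V : List (Fin n)} (hW : NKUniversal n k W)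
    (hV : NKUniversal n (n - k) V) : NKUniversal n 0 (W ++ V) := by
  intro u hu hlen
  rw [← List.take_append_drop (n - k) u]
  refine (hW _ (hu.sublist (List.take_sublist _ _)) ?_).append
    (hV _ (hu.sublist (List.drop_sublist _ _)) ?_) <;> simp [hlen]

theorem lamK_le_length {n k : ℕ} {W : List (Fin n)} (hW : NKUniversal n k W) :
    lamK n k ≤ W.length :=
  Nat.sInf_le ⟨W, rfl, hW⟩

theorem exists_nkUniversal_length_eq_lamK (n k : ℕ) :
    ∃ W, W.length = lamK n k ∧ NKUniversal n k W := by
  obtain ⟨W, hW, -⟩ := exists_nkUniversal_length_le n k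
  have hne : {l | ∃ W : List (Fin n), W.length = l ∧ NKUniversal n k W}.Nonempty :=
    ⟨W.length, W, rfl, hW⟩
  exact Nat.sInf_mem hne

theorem lamK_le (n k : ℕ) : lamK n k ≤ (n - 1) * (n - k) + 1 := by
  obtain ⟨W, hW, hlen⟩ := exists_nkUniversal_length_le n k
  exact (lamK_le_length hW).trans hlen

theorem lamK_zero_le (n k : ℕ) : lamK n 0 ≤ lamK n k + (n - 1) * k + 1 := by
  obtain ⟨W, hWlen, hW⟩ := exists_nkUniversal_length_eq_lamK n k
  obtain ⟨V, hV, hVlen⟩ := exists_nkUniversal_length_le n (n - k)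
  have hVk : (n - 1) * (n - (n - k)) ≤ (n - 1) * k := Nat.mul_le_mul_left _ (by omega)
  have hWV := lamK_le_length (hW.append hV)
  rw [List.length_append] at hWV
  omega

theorem lamK_le_sq_add_one (n k : ℕ) : lamK n k ≤ n ^ 2 + 1 :=
  (lamK_le n k).trans <| Nat.add_le_add_right
    ((Nat.mul_le_mul (Nat.sub_le _ _) (Nat.sub_le _ _)).trans_eq (sq n).symm) 1

theorem lamK_zero_le_mul_add (n k : ℕ) : lamK n 0 ≤ lamK n k + k * n + 1 :=
  (lamK_zero_le n k).trans <| Nat.add_le_add_right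
    (Nat.add_le_add_left ((Nat.mul_le_mul_right _ (Nat.sub_le _ _)).trans_eq (mul_comm _ _)) _) 1

theorem Asymptotics.IsLittleO.of_le_of_le {α E : Type*} [Norm E] {F : Filter α}
    {f l u : α → ℝ} {g : α → E} (hl : l =o[F] g) (hu : u =o[F] g)
    (hlf : ∀ᶠ x in F, l x ≤ f x) (hfu : ∀ᶠ x in F, f x ≤ u x) : f =o[F] g := by
  have hf : f =O[F] fun x => |l x| + |u x| := by
    refine IsBigO.of_bound 1 ?_
    filter_upwards [hlf, hfu] with x hlx hux
    rw [one_mul, Real.norm_eq_abs, Real.norm_eq_abs,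
      abs_of_nonneg (add_nonneg (abs_nonneg (l x)) (abs_nonneg (u x)))]
    exact abs_le.mpr ⟨by linarith [neg_abs_le (l x), abs_nonneg (u x)],
      by linarith [le_abs_self (u x), abs_nonneg (l x)]⟩
  exact hf.trans_isLittleO (hl.abs_left.add hu.abs_left)

/-- for fixed `k`, `λ_k(n) ≤ (n-1)(n-k) + 1` and
`λ(n) ≤ λ_k(n) + (n-1)k + 1` (i.e. `λ_k(n) ≥ λ(n) - (n-1)k - 1`, where
`λ(n) = λ_0(n)`); consequently, since `λ(n) = n² - o(n²)`, also
`λ_k(n) = n² - o(n²)`. -/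
theorem lamK_bounds_and_asymptotics (k : ℕ) :
    (∀ n : ℕ, lamK n k ≤ (n - 1) * (n - k) + 1) ∧
      (∀ n : ℕ, lamK n 0 ≤ lamK n k + (n - 1) * k + 1) ∧
      (((fun n : ℕ => (n : ℝ) ^ 2 - lamK n 0) =o[atTop] fun n : ℕ => (n : ℝ) ^ 2) →
        ((fun n : ℕ => (n : ℝ) ^ 2 - lamK n k) =o[atTop] fun n : ℕ => (n : ℝ) ^ 2)) := by
  refine ⟨fun n => lamK_le n k, fun n => lamK_zero_le n k, fun h0 => ?_⟩
  have hlin : (fun n : ℕ => (k : ℝ) * n + 1) =o[atTop] fun n : ℕ => (n : ℝ) ^ 2 := by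
    have hpow1 := (isLittleO_pow_pow_atTop_of_lt (𝕜 := ℝ) one_lt_two).natCast_atTop
    have hpow0 := (isLittleO_pow_pow_atTop_of_lt (𝕜 := ℝ) two_pos).natCast_atTop
    simpa using (hpow1.const_mul_left (k : ℝ)).add hpow0
  refine hlin.neg_left.of_le_of_le (h0.add hlin) (.of_forall fun n => ?_) (.of_forall fun n => ?_)
  · have hk : (lamK n k : ℝ) ≤ n ^ 2 + 1 := by exact_mod_cast lamK_le_sq_add_one n k
    have hkn : (0 : ℝ) ≤ k * n := by positivity
    linarith
  · have h0k : (lamK n 0 : ℝ) ≤ lamK n k + k * n + 1 := by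
      exact_mod_cast lamK_zero_le_mul_add n k
    linarith
end

section
/- The concatenation of an (n,k)-universal word and an (n,n-k)-universal word is an n-universal word; hence λ(n) ≤ λ_k(n) + λ_{n-k}(n). -/
lemma sublist_join_replicate {α : Type*} (b : List α) (hb : ∀ x : α, x ∈ b) :
    ∀ (u : List α) (m : ℕ), u.length ≤ m → u.Sublist (List.replicate m b).flatten := by
  intro u
  induction u with
  | nil => intro m _; exact List.nil_sublist _
  | cons a u ih =>
      intro m hm
      cases m with
      | zero => simp at hm
      | succ m =>
          rw [List.replicate_succ, List.flatten_cons]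
          have h1 : [a].Sublist b := List.singleton_sublist.mpr (hb a)
          have h2 : u.Sublist (List.replicate m b).flatten :=
            ih m (by simpa using Nat.succ_le_succ_iff.mp hm)
          simpa using List.Sublist.append h1 h2

lemma nkUniversal_exists (n k : ℕ) :
    ∃ W : List (Fin n), NKUniversal n k W := by
  refine ⟨(List.replicate n (List.finRange n)).flatten, ?_⟩
  intro u _ hlen
  exact sublist_join_replicate _ (fun x => List.mem_finRange x) u n
    (by omega)

lemma lamK_mem (n k : ℕ) :
    ∃ W : List (Fin n), W.length = lamK n k ∧ NKUniversal n k W := by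
  have hne : {l : ℕ | ∃ W : List (Fin n), W.length = l ∧ NKUniversal n k W}.Nonempty := by
    obtain ⟨W, hW⟩ := nkUniversal_exists n k
    exact ⟨W.length, W, rfl, hW⟩
  exact Nat.sInf_mem hne

/-- the concatenation of an `(n,k)`-universal word and an
`(n,n-k)`-universal word is `n`-universal (i.e. `(n,0)`-universal); hence
`λ(n) ≤ λ_k(n) + λ_{n-k}(n)`. -/
theorem nkUniversal_append (n k : ℕ) :
    (∀ W₁ W₂ : List (Fin n), NKUniversal n k W₁ → NKUniversal n (n - k) W₂ →
        NKUniversal n 0 (W₁ ++ W₂)) ∧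
      lamK n 0 ≤ lamK n k + lamK n (n - k) := by
  have main : ∀ W₁ W₂ : List (Fin n), NKUniversal n k W₁ → NKUniversal n (n - k) W₂ →
      NKUniversal n 0 (W₁ ++ W₂) := by
    intro W₁ W₂ h₁ h₂ u hnd hlen
    have hu : u = u.take (n - k) ++ u.drop (n - k) := (List.take_append_drop _ u).symm
    rw [hu]
    refine List.Sublist.append ?_ ?_
    · refine h₁ _ (List.Nodup.sublist (List.take_sublist _ _) hnd) ?_
      rw [List.length_take, hlen]
      omega
    · refine h₂ _ (List.Nodup.sublist (List.drop_sublist _ _) hnd) ?_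
      rw [List.length_drop, hlen]; omega
  refine ⟨main, ?_⟩
  obtain ⟨W₁, hl₁, hu₁⟩ := lamK_mem n k
  obtain ⟨W₂, hl₂, hu₂⟩ := lamK_mem n (n - k)
  have : (W₁ ++ W₂).length = lamK n k + lamK n (n - k) := by
    simp [hl₁, hl₂]
  exact Nat.sInf_le ⟨W₁ ++ W₂, this, main W₁ W₂ hu₁ hu₂⟩
end

section
/- Every word fixing the family of conjunctive networks on symmetric directed graphs with n ≥ 2 vertices is (n,1)-universal; hence the fixing length λ_CS(n) of this family is at least λ_1(n). -/
/-- The digraph `E` is symmetric: arcs between distinct vertices come in pairs. -/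
def SymDigraph {n : ℕ} (E : Fin n → Fin n → Bool) : Prop :=
  ∀ i j : Fin n, i ≠ j → E i j = E j i

/-- The conjunctive network on the digraph `E`: `f_i(x)` is the conjunction of `x_j`
over the in-neighbors `j` of `i` (`1` if `i` has no in-neighbor). -/
def conjNet {n : ℕ} (E : Fin n → Fin n → Bool) (x : Fin n → Bool) (i : Fin n) : Bool :=
  decide (∀ j : Fin n, E j i = true → x j = true)

/-- `λ_CS(n)`: the fixing length of the family of conjunctive networks on symmetric
digraphs on `n` vertices. -/
noncomputable def lamCS (n : ℕ) : ℕ :=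
  sInf {l : ℕ | ∃ W : List (Fin n), W.length = l ∧
    ∀ E : Fin n → Fin n → Bool, SymDigraph E → Fixes (conjNet E) W}

/-!
Lower bound: write a repetition-free word of length `n - 1` as `u`, pick a letter `v` outside it,
and run the path network of `v :: u` from the state whose only zero is `v`. The loop keeps `v` at
zero, and at a fixed point zeros spread along arcs, so a fixing word must drive every vertex to
zero; but the zero can reach `u[k]` only by travelling along the path, i.e. after
`u[0], …, u[k]` have been updated in this order. Hence `u` is a subword.

Finiteness of `λ_CS(n)`: conjunctive networks are monotone, and a monotone network reaches a
fixed point from any state: raise unstable coordinates until `f x ≤ x`, after which lowering one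
coordinate at a time preserves `f x ≤ x`. Fixed points stay fixed, so the finitely many pairs
(network, state) can be dealt with one after another.
-/

open Function

variable {n : ℕ}

lemma applyWord_append (f : (Fin n → Bool) → (Fin n → Bool)) (w₁ w₂ : List (Fin n))
    (x : Fin n → Bool) :
    applyWord f (w₁ ++ w₂) x = applyWord f w₂ (applyWord f w₁ x) := by
  induction w₁ generalizing x <;> simp [applyWord, *]

lemma applyWord_concat (f : (Fin n → Bool) → (Fin n → Bool)) (w : List (Fin n)) (a : Fin n)
    (x : Fin n → Bool) :
    applyWord f (w ++ [a]) x = update (applyWord f w x) a (f (applyWord f w x) a) := by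
  rw [applyWord_append]; rfl

lemma applyWord_eq_self_of_map_eq_self {f : (Fin n → Bool) → (Fin n → Bool)} {x : Fin n → Bool}
    (hx : f x = x) (w : List (Fin n)) : applyWord f w x = x := by
  induction w with
  | nil => rfl
  | cons a w ih => simpa [applyWord, updateStep, hx] using ih

lemma exists_word_map_le (f : (Fin n → Bool) → (Fin n → Bool)) (x : Fin n → Bool) :
    ∃ w, f (applyWord f w x) ≤ applyWord f w x := by
  induction x using WellFoundedGT.induction with
  | _ x ih =>
    by_cases hx : f x ≤ x
    · exact ⟨[], hx⟩
    obtain ⟨i, hi⟩ : ∃ i, x i < f x i := by simpa [Pi.le_def] using hx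
    obtain ⟨w, hw⟩ := ih _ (lt_update_self_iff.2 hi)
    exact ⟨i :: w, hw⟩

lemma exists_word_map_eq_self_of_map_le {f : (Fin n → Bool) → (Fin n → Bool)} (hf : Monotone f)
    {x : Fin n → Bool} (hx : f x ≤ x) : ∃ w, f (applyWord f w x) = applyWord f w x := by
  induction x using WellFoundedLT.induction with
  | _ x ih =>
    by_cases hfix : f x = x
    · exact ⟨[], hfix⟩
    obtain ⟨i, hi⟩ : ∃ i, f x i < x i := by
      simpa [Pi.lt_def, hx] using lt_of_le_of_ne hx hfix
    have hlt : update x i (f x i) < x := update_lt_self_iff.2 hi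
    have hle : f x ≤ update x i (f x i) := by
      intro j
      rcases eq_or_ne j i with rfl | hj
      · simp
      · simpa [hj] using hx j
    obtain ⟨w, hw⟩ := ih _ hlt ((hf hlt.le).trans hle)
    exact ⟨i :: w, hw⟩

lemma exists_word_map_eq_self {f : (Fin n → Bool) → (Fin n → Bool)} (hf : Monotone f)
    (x : Fin n → Bool) : ∃ w, f (applyWord f w x) = applyWord f w x := by
  obtain ⟨w₁, hw₁⟩ := exists_word_map_le f x
  obtain ⟨w₂, hw₂⟩ := exists_word_map_eq_self_of_map_le hf hw₁
  exact ⟨w₁ ++ w₂, by rwa [applyWord_append]⟩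

lemma exists_word_fixes_forall {ι : Type*} [Fintype ι] (F : ι → (Fin n → Bool) → (Fin n → Bool))
    (hF : ∀ i x, ∃ w, F i (applyWord (F i) w x) = applyWord (F i) w x) :
    ∃ W, ∀ i, Fixes (F i) W := by
  suffices h : ∀ S : Finset (ι × (Fin n → Bool)), ∃ W, ∀ p ∈ S,
      F p.1 (applyWord (F p.1) W p.2) = applyWord (F p.1) W p.2 by
    obtain ⟨W, hW⟩ := h Finset.univ
    exact ⟨W, fun i x => hW (i, x) (Finset.mem_univ _)⟩
  classical
  intro S
  induction S using Finset.induction_on with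
  | empty => exact ⟨[], by simp⟩
  | insert p S _ ih =>
    obtain ⟨W, hW⟩ := ih
    obtain ⟨v, hv⟩ := hF p.1 (applyWord (F p.1) W p.2)
    refine ⟨W ++ v, fun q hq => ?_⟩
    rw [applyWord_append]
    rcases Finset.mem_insert.1 hq with rfl | hq
    · exact hv
    · rw [applyWord_eq_self_of_map_eq_self (hW q hq)]
      exact hW q hq

lemma conjNet_monotone (E : Fin n → Fin n → Bool) : Monotone (conjNet E) := by
  intro x y hxy i
  simp only [conjNet, Bool.le_iff_imp, decide_eq_true_eq]
  exact fun hx j hj => Bool.le_iff_imp.1 (hxy j) (hx j hj)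

lemma exists_word_fixes_conjNet : ∃ W : List (Fin n), ∀ E, Fixes (conjNet E) W :=
  exists_word_fixes_forall conjNet fun E => exists_word_map_eq_self (conjNet_monotone E)

lemma conjNet_eq_false_iff {E : Fin n → Fin n → Bool} {x : Fin n → Bool} {i : Fin n} :
    conjNet E x i = false ↔ ∃ j, E j i = true ∧ x j = false := by
  simp [conjNet]

lemma eq_false_of_conjNet_eq_self {E : Fin n → Fin n → Bool} {y : Fin n → Bool}
    (hy : conjNet E y = y) {a b : Fin n} (hab : E a b = true) (ha : y a = false) :
    y b = false := by
  rw [← hy]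
  exact conjNet_eq_false_iff.2 ⟨a, hab, ha⟩

lemma applyWord_conjNet_eq_false_of_loop {E : Fin n → Fin n → Bool} {i : Fin n}
    (hi : E i i = true) {x : Fin n → Bool} (hx : x i = false) (w : List (Fin n)) :
    applyWord (conjNet E) w x i = false := by
  induction w generalizing x with
  | nil => exact hx
  | cons a w ih =>
    apply ih
    rcases eq_or_ne i a with rfl | hia
    · simpa [updateStep] using conjNet_eq_false_iff.2 ⟨i, hi, hx⟩
    · simpa [updateStep, hia] using hx

lemma exists_not_mem_of_length_lt {u : List (Fin n)} (h : u.length < n) : ∃ v, v ∉ u := by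
  by_contra! hall
  have := ((List.nodup_finRange n).subperm fun v _ => hall v).length_le
  simp only [List.length_finRange] at this
  omega

lemma mem_of_nodup_of_length_eq {L : List (Fin n)} (hL : L.Nodup) (hlen : L.length = n)
    (a : Fin n) : a ∈ L := by
  by_contra ha
  have := (List.nodup_cons.2 ⟨ha, hL⟩).length_le_card
  simp only [List.length_cons, Fintype.card_fin] at this
  omega

section PathGraph

variable (L : List (Fin n))

/-- The path network of `L`: the path `L[0] — L[1] — ⋯` with a loop at each end. -/
def pathGraph (a b : Fin n) : Bool :=
  decide (L.idxOf a + 1 = L.idxOf b ∨ L.idxOf b + 1 = L.idxOf a ∨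
    (a = b ∧ (L.idxOf a = 0 ∨ L.idxOf a + 1 = L.length)))

lemma pathGraph_symm : SymDigraph (pathGraph L) := by
  intro a b _
  simp only [pathGraph, decide_eq_decide]
  constructor <;> rintro (h | h | ⟨rfl, h⟩) <;> simp_all

variable {L}

lemma pathGraph_getElem_zero (h : 0 < L.length) : pathGraph L L[0] L[0] = true := by
  cases L <;> simp_all [pathGraph]

lemma pathGraph_getElem_succ (hL : L.Nodup) {k : ℕ} (hk : k + 1 < L.length) :
    pathGraph L L[k] L[k + 1] = true := by
  simp [pathGraph, hL.idxOf_getElem]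

lemma exists_eq_getElem_of_pathGraph (hL : L.Nodup) (hmem : ∀ a, a ∈ L) {a : Fin n} {k : ℕ}
    (hk : k < L.length) (h : pathGraph L a L[k] = true) :
    ∃ i, ∃ hi : i < L.length, L[i] = a ∧ (i + 1 = k ∨ i = k ∨ i = k + 1) := by
  refine ⟨L.idxOf a, List.idxOf_lt_length_iff.2 (hmem a), List.getElem_idxOf _, ?_⟩
  simp only [pathGraph, hL.idxOf_getElem, decide_eq_true_eq] at h
  rcases h with h | h | ⟨rfl, -⟩
  · omega
  · omega
  · simp [hL.idxOf_getElem]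

end PathGraph

lemma take_sublist_of_applyWord_pathGraph_eq_false {v : Fin n} {u : List (Fin n)}
    (hL : (v :: u).Nodup) (hmem : ∀ a, a ∈ v :: u) (W : List (Fin n)) {k : ℕ}
    (hk : k < (v :: u).length)
    (h : applyWord (conjNet (pathGraph (v :: u))) W (update (fun _ => true) v false)
      (v :: u)[k] = false) :
    (u.take k).Sublist W := by
  induction W using List.reverseRecOn generalizing k with
  | nil =>
    rcases k with _ | k
    · simp
    · simp only [List.length_cons, Nat.add_lt_add_iff_right] at hk
      have hne : u[k] ≠ v := fun h => (List.nodup_cons.1 hL).1 (h ▸ List.getElem_mem _)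
      simp [applyWord, hne] at h
  | append_singleton W a ih =>
    rw [applyWord_concat] at h
    by_cases hka : (v :: u)[k] = a
    · rw [hka, update_self, conjNet_eq_false_iff] at h
      obtain ⟨j, hj, hyj⟩ := h
      rw [← hka] at hj
      obtain ⟨i, hi, rfl, hik⟩ := exists_eq_getElem_of_pathGraph hL hmem hk hj
      have hiW := ih hi hyj
      rcases hik with rfl | rfl | rfl
      · rw [← List.take_concat_get' u i (by simpa using hk)]
        exact hiW.append (by simp [← hka])
      · exact hiW.trans (List.sublist_append_left _ _)
      · exact (List.take_sublist_take_left (by omega)).trans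
          (hiW.trans (List.sublist_append_left _ _))
    · rw [update_of_ne hka] at h
      exact (ih hk h).trans (List.sublist_append_left _ _)

lemma sublist_of_fixes_pathGraph {v : Fin n} {u W : List (Fin n)} (hL : (v :: u).Nodup)
    (hmem : ∀ a, a ∈ v :: u) (hW : Fixes (conjNet (pathGraph (v :: u))) W) : u.Sublist W := by
  set x₀ : Fin n → Bool := update (fun _ => true) v false
  have hzero : ∀ k (hk : k < (v :: u).length),
      applyWord (conjNet (pathGraph (v :: u))) W x₀ (v :: u)[k] = false := by
    intro k
    induction k with
    | zero => exact fun hk =>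
        applyWord_conjNet_eq_false_of_loop (pathGraph_getElem_zero hk) (by simp [x₀]) W
    | succ k ih => exact fun hk =>
        eq_false_of_conjNet_eq_self (hW x₀) (pathGraph_getElem_succ hL hk) (ih (by omega))
  simpa using take_sublist_of_applyWord_pathGraph_eq_false hL hmem W (k := u.length) (by simp)
    (hzero _ _)

lemma nkUniversal_one_of_fixes {W : List (Fin n)}
    (hW : ∀ E, SymDigraph E → Fixes (conjNet E) W) : NKUniversal n 1 W := by
  intro u hu hlen
  rcases Nat.eq_zero_or_pos n with rfl | hn
  · simp_all
  obtain ⟨v, hv⟩ := exists_not_mem_of_length_lt (u := u) (by omega)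
  have hL : (v :: u).Nodup := List.nodup_cons.2 ⟨hv, hu⟩
  have hmem := mem_of_nodup_of_length_eq hL (by simp only [List.length_cons]; omega)
  exact sublist_of_fixes_pathGraph hL hmem (hW _ (pathGraph_symm _))

theorem symmetric_conjunctive_lower_bound_general (n : ℕ) :
    (∀ W : List (Fin n),
        (∀ E : Fin n → Fin n → Bool, SymDigraph E → Fixes (conjNet E) W) →
        NKUniversal n 1 W) ∧
      lamK n 1 ≤ lamCS n := by
  refine ⟨fun W hW => nkUniversal_one_of_fixes hW, ?_⟩
  obtain ⟨W₀, hW₀⟩ := exists_word_fixes_conjNet (n := n)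
  obtain ⟨W, hWlen, hW⟩ := Nat.sInf_mem (s := {l | ∃ W : List (Fin n), W.length = l ∧
      ∀ E, SymDigraph E → Fixes (conjNet E) W}) ⟨W₀.length, W₀, rfl, fun E _ => hW₀ E⟩
  exact Nat.sInf_le ⟨W, hWlen, nkUniversal_one_of_fixes hW⟩

/-- every word fixing all conjunctive networks on symmetric digraphs on
`n ≥ 2` vertices is `(n,1)`-universal; hence `λ_1(n) ≤ λ_CS(n)`. -/
theorem symmetric_conjunctive_lower_bound (n : ℕ) (hn : 2 ≤ n) :
    (∀ W : List (Fin n),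
        (∀ E : Fin n → Fin n → Bool, SymDigraph E → Fixes (conjNet E) W) →
        NKUniversal n 1 W) ∧
      lamK n 1 ≤ lamCS n :=
  symmetric_conjunctive_lower_bound_general n
end

section
/- If the interaction graph of a Boolean network f : {0,1}^n → {0,1}^n is acyclic, then its asynchronous graph is acyclic. -/
/-!
If the interaction graph is acyclic, the relation "`j → i` in `G(f)`" is well-founded, so we may
argue by induction on coordinates. Fix a state `x` and let `C` be its strongly connected component
in `Γ(f)`. If every in-neighbour `j` of `i` is constant on `C`, then so is `f_i`, say equal to `c`.
Inside `C` an update of coordinate `i` can only set it to `c`, so once a state of `C` has `i`-th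
coordinate `c`, so has every state of `C` after it; as every state of `C` lies after every other,
the `i`-th coordinate is constant on `C` as well. Hence `C = {x}`, so no arc lies on a cycle.
-/

open Function Relation

theorem wellFounded_of_not_transGen_self {α : Type*} [Finite α] {r : α → α → Prop}
    (h : ∀ a, ¬ TransGen r a a) : WellFounded r :=
  haveI : Std.Irrefl (TransGen r) := ⟨h⟩
  Subrelation.wf TransGen.single (Finite.wellFounded_of_trans_of_irrefl _)

theorem dependsOn_of_forall_update_eq {ι β : Type*} {α : ι → Type*} [DecidableEq ι] [Finite ι]
    {g : (Π i, α i) → β} {s : Set ι} (h : ∀ j ∉ s, ∀ x a, g (update x j a) = g x) :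
    DependsOn g s := by
  cases nonempty_fintype ι
  intro x y hxy
  suffices key : ∀ (t : Finset ι) (x : Π i, α i),
      (∀ j ∈ s, x j = y j) → (∀ j ∉ t, x j = y j) → g x = g y from
    key Finset.univ x hxy (by simp)
  intro t
  induction t using Finset.induction_on with
  | empty => exact fun x _ hx => congrArg g (funext fun j => hx j (Finset.notMem_empty j))
  | insert a t _ ih =>
    intro x hs ht
    have hupdate : g (update x a (y a)) = g x := by
      by_cases has : a ∈ s
      · rw [← hs a has, update_eq_self]
      · exact h a has x (y a)
    rw [← hupdate]
    refine ih _ (fun j hj => ?_) (fun j hj => ?_) <;> obtain rfl | hja := eq_or_ne j a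
    · exact update_self ..
    · rw [update_of_ne hja, hs j hj]
    · exact update_self ..
    · rw [update_of_ne hja, ht j (by simp [hja, hj])]

section BooleanNetwork

variable {n : ℕ}

theorem dependsOn_setOf_dependsOnCoord (f : (Fin n → Bool) → (Fin n → Bool)) (i : Fin n) :
    DependsOn (fun x => f x i) {j | DependsOnCoord f i j} := by
  refine dependsOn_of_forall_update_eq fun j hj x a => ?_
  obtain rfl | rfl : a = x j ∨ a = !x j := by cases a <;> cases x j <;> simp
  · rw [update_eq_self]
  · by_contra h
    exact hj ⟨x, h⟩

variable {f : (Fin n → Bool) → (Fin n → Bool)}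

theorem AsyncArc.ne {x y : Fin n → Bool} (h : AsyncArc f x y) : x ≠ y := by
  obtain ⟨i, hi, rfl⟩ := h
  intro hx
  exact hi (by simpa using (congrFun hx i).symm)

theorem AsyncArc.apply_eq_or {x y : Fin n → Bool} (h : AsyncArc f x y) (i : Fin n) :
    y i = x i ∨ y i = f x i := by
  obtain ⟨j, -, rfl⟩ := h
  by_cases hij : i = j
  · subst hij
    simp
  · simp [update_of_ne hij]

theorem apply_eq_of_reflTransGen_of_apply_eq {x y z : Fin n → Bool} {i : Fin n} {c : Bool}
    (hc : ∀ w, ReflTransGen (AsyncArc f) x w → ReflTransGen (AsyncArc f) w x → f w i = c)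
    (hxy : ReflTransGen (AsyncArc f) x y) (hyi : y i = c)
    (hyz : ReflTransGen (AsyncArc f) y z) (hzx : ReflTransGen (AsyncArc f) z x) : z i = c := by
  induction hyz with
  | refl => exact hyi
  | @tail w z hyw hwz ih =>
    have hwx := ReflTransGen.head hwz hzx
    rcases hwz.apply_eq_or i with h | h
    · rw [h, ih hwx]
    · rw [h, hc w (hxy.trans hyw) hwx]

theorem apply_eq_apply_of_reflTransGen_of_reflTransGen
    (hwf : WellFounded fun j i => DependsOnCoord f i j) {x : Fin n → Bool} (i : Fin n) :
    ∀ y, ReflTransGen (AsyncArc f) x y → ReflTransGen (AsyncArc f) y x → y i = x i := by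
  induction i using hwf.induction with
  | _ i ih =>
  intro y hxy hyx
  have hconst (w) (hxw : ReflTransGen (AsyncArc f) x w) (hwx : ReflTransGen (AsyncArc f) w x) :
      f w i = f x i :=
    dependsOn_setOf_dependsOnCoord f i fun j hj => ih j hj w hxw hwx
  by_cases hx : x i = f x i
  · rw [hx]
    exact apply_eq_of_reflTransGen_of_apply_eq hconst .refl hx hxy hyx
  by_cases hy : y i = f x i
  · exact absurd (apply_eq_of_reflTransGen_of_apply_eq hconst hxy hy hyx .refl) hx
  · revert hx hy
    cases x i <;> cases y i <;> cases f x i <;> simp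

theorem eq_of_reflTransGen_of_reflTransGen (hwf : WellFounded fun j i => DependsOnCoord f i j)
    {x y : Fin n → Bool} (hxy : ReflTransGen (AsyncArc f) x y)
    (hyx : ReflTransGen (AsyncArc f) y x) : y = x :=
  funext fun i => apply_eq_apply_of_reflTransGen_of_reflTransGen hwf i y hxy hyx

end BooleanNetwork

/-- if the interaction graph of `f` is acyclic, then the asynchronous
graph of `f` is acyclic. -/
theorem asyncGraph_acyclic_of_interactionGraph_acyclic (n : ℕ)
    (f : (Fin n → Bool) → (Fin n → Bool))
    (hG : ∀ i : Fin n, ¬ Relation.TransGen (fun j i => DependsOnCoord f i j) i i) :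
    ∀ x : Fin n → Bool, ¬ Relation.TransGen (AsyncArc f) x x := by
  intro x hx
  obtain ⟨y, hxy, hyx⟩ := TransGen.head'_iff.mp hx
  exact hxy.ne (eq_of_reflTransGen_of_reflTransGen (wellFounded_of_not_transGen_self hG)
    (.single hxy) hyx).symm
end
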